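/- arXiv:1305.6162 — 3 statements merged into one kernel-verified Lean document; each statement's English description precedes it below -/
import Mathlib

section
/- Let W_{p'} ⊆ W_p be a parabolic subgroup and let W^{p'}∩W_p denote the set of shortest coset representatives for W_{p'}\W_p. The homomorphism of right H_n-modules z : M^{p'}_q → M^p_q determined by z(N_e) = N_e is well defined, commutes with the bar involutions, sends the canonical basis element N̲_w of M^{p'}_q to the canonical basis element N̲_w of M^p_q if w ∈ W^{p+q} and to 0 otherwise, and satisfies z ∘ j = (Σ_{x ∈ W^{p'}∩W_p} q^{2 l(x)})·id_{M^p_q}, where j : M^p_q → M^{p'}_q is the injective homomorphism of right H_n-modules defined by j(N_w) = Σ_{x ∈ W^{p'}∩W_p} (-q)^{l(x)}·N_{xw}. -/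
/-!
`M^{p'}_q` is induced from a character of `H_{p'+q}` which is the restriction of the character
defining `M^p_q`. Hence `N'_e ↦ N_e` extends uniquely to an `H_n`-linear map `z`, it satisfies
`z N'_w = N_w` for every `w`, and it commutes with the bar involutions because both modules are
generated by bar-invariant vectors.

A shortest representative `w` for `W_{p'+q}` factors as `w = x u` with `x ∈ W_p`, `u` shortest for
`W_{p+q}` and lengths adding, so `N_w = (-q)^{ℓ(x)} N_u`. Therefore `z N̲'_w - N̲_w`, resp.
`z N̲'_w` when `x ≠ e`, is a bar-invariant element of the `q ℤ[q]`-span of the standard basis of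
`M^p_q`. Since the bar involution is unitriangular with respect to length, the leading coefficient
`c(q)` of such an element satisfies `c(q⁻¹) = c(q)`, so it vanishes.

For `j`, the vector `ξ = Σ_{x ∈ W^{p'} ∩ W_p} (-q)^{ℓ(x)} N'_x` transforms under `H_p` by the sign
character: pairing `x` with `x s` cancels terms, and an unpaired `x` satisfies `x s = s' x` with
`s' ∈ W_{p'}` (Deodhar's lemma). So `j` is the `H_n`-linear map `N_e ↦ ξ`, and
`z ξ = (Σ_x q^{2ℓ(x)}) N_e` with a nonzero scalar, which also gives injectivity of `j`.
-/

open scoped Classical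

noncomputable section

abbrev K : Type := RatFunc ℂ

noncomputable def q : K := RatFunc.X

def s (n : ℕ) (i : Fin (n - 1)) : Equiv.Perm (Fin n) :=
  Equiv.swap ⟨(i : ℕ), by have := i.isLt; omega⟩ ⟨(i : ℕ) + 1, by have := i.isLt; omega⟩

def wordProd (n : ℕ) (l : List (Fin (n - 1))) : Equiv.Perm (Fin n) :=
  (l.map (s n)).prod

def len (n : ℕ) (w : Equiv.Perm (Fin n)) : ℕ :=
  sInf {k | ∃ l : List (Fin (n - 1)), l.length = k ∧ wordProd n l = w}

def bruhatLE (n : ℕ) (u w : Equiv.Perm (Fin n)) : Prop :=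
  ∃ l : List (Fin (n - 1)), l.length = len n w ∧ wordProd n l = w ∧
    ∃ t : List (Fin (n - 1)), t.Sublist l ∧ wordProd n t = u

def bruhatLT (n : ℕ) (u w : Equiv.Perm (Fin n)) : Prop :=
  bruhatLE n u w ∧ u ≠ w

/-- The parabolic subgroup of `S_n` generated by the simple transpositions indexed by `P`. -/
def parab (n : ℕ) (P : Finset (Fin (n - 1))) : Subgroup (Equiv.Perm (Fin n)) :=
  Subgroup.closure {σ | ∃ i ∈ P, σ = s n i}

/-- `w` is a shortest coset representative for `W_P \ S_n`. -/
def IsShort (n : ℕ) (P : Finset (Fin (n - 1))) (w : Equiv.Perm (Fin n)) : Prop :=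
  ∀ x ∈ parab n P, len n w ≤ len n (x * w)

/-- `C` is the canonical basis of the mixed induced module with standard basis `N`
(indexed by the permutations satisfying `short`) and bar involution `barM`:
each `C w` is bar-invariant and `C w = N w + Σ_{w' ≺ w} R(q)·N_{w'}` with `R ∈ q·ℤ[q]`. -/
def IsCanonBasis (n : ℕ) {M : Type} [AddCommGroup M] [Module K M]
    (short : Equiv.Perm (Fin n) → Prop) (N : Equiv.Perm (Fin n) → M)
    (barM : M → M) (C : Equiv.Perm (Fin n) → M) : Prop :=
  ∀ w, short w →
    barM (C w) = C w ∧
    ∃ R : Equiv.Perm (Fin n) → Polynomial ℤ,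
      (∀ w', ¬ (short w' ∧ bruhatLT n w' w) → R w' = 0) ∧
      C w = N w + ∑ w' : Equiv.Perm (Fin n), (q * Polynomial.aeval q (R w')) • N w'

namespace HeckeModule

open Equiv Finset Polynomial

variable {n : ℕ}

/-! ### Simple transpositions and length -/

def lower (i : Fin (n - 1)) : Fin n := ⟨i, by omega⟩

def upper (i : Fin (n - 1)) : Fin n := ⟨i + 1, by omega⟩

@[simp] lemma val_lower (i : Fin (n - 1)) : (lower i : ℕ) = i := rfl

@[simp] lemma val_upper (i : Fin (n - 1)) : (upper i : ℕ) = i + 1 := rfl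

lemma lower_lt_upper (i : Fin (n - 1)) : lower i < upper i := Fin.lt_def.2 (by simp)

lemma apply_lower_lt_or_apply_upper_lt (w : Perm (Fin n)) (i : Fin (n - 1)) :
    w (lower i) < w (upper i) ∨ w (upper i) < w (lower i) :=
  lt_or_gt_of_ne (w.injective.ne (lower_lt_upper i).ne)

lemma s_eq_swap (i : Fin (n - 1)) : s n i = swap (lower i) (upper i) := rfl

@[simp] lemma s_apply_lower (i : Fin (n - 1)) : s n i (lower i) = upper i := swap_apply_left _ _

@[simp] lemma s_apply_upper (i : Fin (n - 1)) : s n i (upper i) = lower i := swap_apply_right _ _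

@[simp] lemma s_mul_self (i : Fin (n - 1)) : s n i * s n i = 1 := swap_mul_self _ _

@[simp] lemma s_inv (i : Fin (n - 1)) : (s n i)⁻¹ = s n i := swap_inv _ _

@[simp] lemma s_apply_s_apply (i : Fin (n - 1)) (x : Fin n) : s n i (s n i x) = x :=
  swap_apply_self _ _ _

lemma val_s_apply (i : Fin (n - 1)) (x : Fin n) :
    (s n i x : ℕ) =
      if (x : ℕ) = i then (i : ℕ) + 1 else if (x : ℕ) = (i : ℕ) + 1 then (i : ℕ) else x := by
  rw [s_eq_swap, swap_apply_def]
  split_ifs <;> simp_all [Fin.ext_iff]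

lemma s_apply_lt_s_apply {i : Fin (n - 1)} {x y : Fin n} (hxy : x < y)
    (hne : (x, y) ≠ (lower i, upper i)) : s n i x < s n i y := by
  have hne' : ¬((x : ℕ) = i ∧ (y : ℕ) = i + 1) := fun ⟨h1, h2⟩ =>
    hne (Prod.ext (Fin.ext h1) (Fin.ext h2))
  rw [Fin.lt_def] at hxy ⊢
  rw [val_s_apply, val_s_apply]
  split_ifs <;> omega

lemma lt_of_lower_lt_upper {α : Type*} [Preorder α] (f : Fin n → α) {x y : Fin n} (hxy : x < y)
    (h : ∀ i : Fin (n - 1), x ≤ lower i → upper i ≤ y → f (lower i) < f (upper i)) :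
    f x < f y := by
  obtain ⟨d, hd⟩ : ∃ d, (y : ℕ) = x + d + 1 := ⟨y - x - 1, by rw [Fin.lt_def] at hxy; omega⟩
  induction d generalizing y with
  | zero =>
    have := h ⟨x, by omega⟩ le_rfl (Fin.le_def.2 (by simp; omega))
    rwa [show lower ⟨x, _⟩ = x from rfl, show upper ⟨(x : ℕ), _⟩ = y from Fin.ext (by simp; omega)]
      at this
  | succ d ih =>
    let y' : Fin n := ⟨x + d + 1, by omega⟩
    have h₁ : f x < f y' := ih (Fin.lt_def.2 (by simp [y'])) (fun i hi hi' =>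
      h i hi (hi'.trans (Fin.le_def.2 (by simp [y']; omega)))) rfl
    have h₂ := h ⟨x + d + 1, by omega⟩ (Fin.le_def.2 (by simp; omega))
      (Fin.le_def.2 (by simp; omega))
    rw [show lower ⟨(x : ℕ) + d + 1, _⟩ = y' from rfl,
      show upper ⟨(x : ℕ) + d + 1, _⟩ = y from Fin.ext (by simp; omega)] at h₂
    exact h₁.trans h₂

lemma eq_one_of_forall_lower_lt_upper {w : Perm (Fin n)}
    (h : ∀ i : Fin (n - 1), w (lower i) < w (upper i)) : w = 1 := by
  have hw : StrictMono w := fun x y hxy => lt_of_lower_lt_upper w hxy fun i _ _ => h i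
  ext x
  exact Fin.coe_orderIso_apply (hw.orderIsoOfSurjective w w.surjective) x

lemma exists_lt_of_ne_one {w : Perm (Fin n)} (hw : w ≠ 1) :
    ∃ i : Fin (n - 1), w (upper i) < w (lower i) := by
  by_contra! h
  exact hw (eq_one_of_forall_lower_lt_upper fun i =>
    (apply_lower_lt_or_apply_upper_lt w i).resolve_right (not_lt.2 (h i)))

lemma wordProd_nil : wordProd n [] = 1 := rfl

lemma wordProd_cons (i : Fin (n - 1)) (l : List (Fin (n - 1))) :
    wordProd n (i :: l) = s n i * wordProd n l := by
  simp [wordProd]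

lemma wordProd_append (l t : List (Fin (n - 1))) :
    wordProd n (l ++ t) = wordProd n l * wordProd n t := by
  simp [wordProd]

lemma wordProd_concat (l : List (Fin (n - 1))) (i : Fin (n - 1)) :
    wordProd n (l ++ [i]) = wordProd n l * s n i := by
  simp [wordProd]

def inversions (w : Perm (Fin n)) : Finset (Fin n × Fin n) := {p | p.1 < p.2 ∧ w p.2 < w p.1}

lemma mem_inversions {w : Perm (Fin n)} {p : Fin n × Fin n} :
    p ∈ inversions w ↔ p.1 < p.2 ∧ w p.2 < w p.1 := by
  simp [inversions]

/-- Right multiplication by `s n i` permutes the inversions other than `(lower i, upper i)`. -/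
lemma card_inversions_mul_s {w : Perm (Fin n)} {i : Fin (n - 1)}
    (h : w (lower i) < w (upper i)) :
    #(inversions (w * s n i)) = #(inversions w) + 1 := by
  have hmem : (lower i, upper i) ∈ inversions (w * s n i) := by
    simp [mem_inversions, lower_lt_upper, h]
  rw [← card_erase_add_one hmem]
  congr 1
  refine card_bij' (fun p _ => (s n i p.1, s n i p.2)) (fun p _ => (s n i p.1, s n i p.2))
    ?_ ?_ (by simp) (by simp)
  · rintro ⟨x, y⟩ hp
    simp only [mem_erase, mem_inversions, Perm.mul_apply] at hp ⊢
    exact ⟨s_apply_lt_s_apply hp.2.1 hp.1, hp.2.2⟩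
  · rintro ⟨x, y⟩ hp
    obtain ⟨hxy, hw⟩ := mem_inversions.1 hp
    have hne : (x, y) ≠ (lower i, upper i) := by
      rintro ⟨⟩
      exact hw.not_gt h
    refine mem_erase.2 ⟨?_, mem_inversions.2 ⟨s_apply_lt_s_apply hxy hne, by simpa using hw⟩⟩
    intro heq
    simp only [Prod.mk.injEq] at heq
    rw [← s_apply_s_apply i x, heq.1, ← s_apply_s_apply i y, heq.2] at hxy
    exact (lower_lt_upper i).not_gt (by simpa using hxy)

@[simp] lemma inversions_one : inversions (1 : Perm (Fin n)) = ∅ := by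
  ext p
  simpa [mem_inversions] using fun h => h.le

lemma card_inversions_wordProd_le (l : List (Fin (n - 1))) :
    #(inversions (wordProd n l)) ≤ l.length := by
  induction l using List.reverseRecOn with
  | nil => simp [wordProd_nil]
  | append_singleton l i ih =>
    rw [wordProd_concat, List.length_append, List.length_singleton]
    rcases apply_lower_lt_or_apply_upper_lt (wordProd n l) i with h | h
    · rw [card_inversions_mul_s h]
      omega
    · have := card_inversions_mul_s (w := wordProd n l * s n i) (i := i) (by simpa using h)
      rw [mul_assoc, s_mul_self, mul_one] at this
      omega

lemma exists_wordProd_eq_of_card_inversions (w : Perm (Fin n)) :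
    ∃ l, wordProd n l = w ∧ l.length = #(inversions w) := by
  induction hk : #(inversions w) using Nat.strong_induction_on generalizing w with
  | _ k ih =>
    rcases eq_or_ne w 1 with rfl | hw
    · exact ⟨[], rfl, by simp [← hk]⟩
    obtain ⟨i, hi⟩ := exists_lt_of_ne_one hw
    have hcard := card_inversions_mul_s (w := w * s n i) (i := i) (by simpa using hi)
    rw [mul_assoc, s_mul_self, mul_one] at hcard
    obtain ⟨l, hl, hlen⟩ := ih _ (by omega) (w * s n i) rfl
    exact ⟨l ++ [i], by rw [wordProd_concat, hl, mul_assoc, s_mul_self, mul_one],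
      by simp; omega⟩

lemma len_wordProd_le (l : List (Fin (n - 1))) : len n (wordProd n l) ≤ l.length :=
  Nat.sInf_le ⟨l, rfl, rfl⟩

lemma len_eq_card_inversions (w : Perm (Fin n)) : len n w = #(inversions w) := by
  obtain ⟨l, hl, hlen⟩ := exists_wordProd_eq_of_card_inversions w
  refine le_antisymm (hlen ▸ hl ▸ len_wordProd_le l) ?_
  obtain ⟨l', hl'len, rfl⟩ := Nat.sInf_mem (s := {k | ∃ l : List (Fin (n - 1)),
    l.length = k ∧ wordProd n l = w}) ⟨_, l, rfl, hl⟩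
  exact (card_inversions_wordProd_le l').trans hl'len.le

lemma exists_reduced_word (w : Perm (Fin n)) : ∃ l, wordProd n l = w ∧ l.length = len n w :=
  len_eq_card_inversions w ▸ exists_wordProd_eq_of_card_inversions w

lemma len_mul_s_of_lt {w : Perm (Fin n)} {i : Fin (n - 1)} (h : w (lower i) < w (upper i)) :
    len n (w * s n i) = len n w + 1 := by
  rw [len_eq_card_inversions, len_eq_card_inversions, card_inversions_mul_s h]

lemma len_mul_s_of_gt {w : Perm (Fin n)} {i : Fin (n - 1)} (h : w (upper i) < w (lower i)) :
    len n (w * s n i) + 1 = len n w := by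
  simpa [mul_assoc] using (len_mul_s_of_lt (w := w * s n i) (i := i) (by simpa using h)).symm

lemma len_mul_s_eq_or (w : Perm (Fin n)) (i : Fin (n - 1)) :
    len n (w * s n i) = len n w + 1 ∨ len n (w * s n i) + 1 = len n w :=
  (apply_lower_lt_or_apply_upper_lt w i).imp len_mul_s_of_lt len_mul_s_of_gt

@[simp] lemma len_one : len n 1 = 0 :=
  Nat.eq_zero_of_le_zero (len_wordProd_le [])

lemma eq_one_of_len_eq_zero {w : Perm (Fin n)} (h : len n w = 0) : w = 1 := by
  by_contra hw
  obtain ⟨i, hi⟩ := exists_lt_of_ne_one hw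
  have := len_mul_s_of_gt hi
  omega

@[simp] lemma len_inv (w : Perm (Fin n)) : len n w⁻¹ = len n w := by
  rw [len_eq_card_inversions, len_eq_card_inversions]
  refine card_bij' (fun p _ => (w⁻¹ p.2, w⁻¹ p.1)) (fun p _ => (w p.2, w p.1)) ?_ ?_
    (by simp) (by simp)
  · rintro ⟨x, y⟩ hp
    rw [mem_inversions] at hp ⊢
    simpa using hp.symm
  · rintro ⟨x, y⟩ hp
    rw [mem_inversions] at hp ⊢
    simpa using hp.symm

lemma len_mul_le (w v : Perm (Fin n)) : len n (w * v) ≤ len n w + len n v := by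
  obtain ⟨lw, rfl, hlw⟩ := exists_reduced_word w
  obtain ⟨lv, rfl, hlv⟩ := exists_reduced_word v
  simpa [← wordProd_append, ← hlw, ← hlv] using len_wordProd_le (lw ++ lv)

@[simp] lemma len_s (i : Fin (n - 1)) : len n (s n i) = 1 := by
  simpa using len_mul_s_of_lt (w := 1) (lower_lt_upper i)

lemma len_s_mul_of_lt {w : Perm (Fin n)} {i : Fin (n - 1)} (h : w⁻¹ (lower i) < w⁻¹ (upper i)) :
    len n (s n i * w) = len n w + 1 := by
  rw [← len_inv (s n i * w), mul_inv_rev, s_inv, ← len_inv w]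
  exact len_mul_s_of_lt h

lemma len_s_mul_of_gt {w : Perm (Fin n)} {i : Fin (n - 1)} (h : w⁻¹ (upper i) < w⁻¹ (lower i)) :
    len n (s n i * w) + 1 = len n w := by
  rw [← len_inv (s n i * w), mul_inv_rev, s_inv, ← len_inv w]
  exact len_mul_s_of_gt h

theorem len_induction {p : Perm (Fin n) → Prop} (one : p 1)
    (mul_s : ∀ w i, len n (w * s n i) = len n w + 1 → p w → p (w * s n i))
    (w : Perm (Fin n)) : p w := by
  induction hk : len n w using Nat.strong_induction_on generalizing w with
  | _ k ih =>
    rcases eq_or_ne w 1 with rfl | hw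
    · exact one
    obtain ⟨i, hi⟩ := exists_lt_of_ne_one hw
    have hlen := len_mul_s_of_gt hi
    have := mul_s (w * s n i) i (by simpa [mul_assoc] using hlen.symm)
      (ih _ (by omega) _ rfl)
    simpa [mul_assoc] using this

/-! ### Parabolic subgroups -/

lemma s_mem_parab {J : Finset (Fin (n - 1))} {i : Fin (n - 1)} (hi : i ∈ J) :
    s n i ∈ parab n J :=
  Subgroup.subset_closure ⟨i, hi, rfl⟩

lemma wordProd_mem_parab {J : Finset (Fin (n - 1))} {l : List (Fin (n - 1))}
    (hl : ∀ i ∈ l, i ∈ J) : wordProd n l ∈ parab n J := by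
  induction l with
  | nil => exact one_mem _
  | cons i l ih =>
    rw [wordProd_cons]
    exact mul_mem (s_mem_parab (hl i (by simp))) (ih fun j hj => hl j (by simp [hj]))

lemma commute_s_of_mem_parab {P : Finset (Fin (n - 1))} {j : Fin (n - 1)}
    (hj : ∀ i ∈ P, s n i * s n j = s n j * s n i) {x : Perm (Fin n)} (hx : x ∈ parab n P) :
    Commute x (s n j) := by
  induction hx using Subgroup.closure_induction with
  | mem g hg =>
    obtain ⟨i, hi, rfl⟩ := hg
    exact hj i hi
  | one => exact Commute.one_left _
  | mul g h _ _ hg hh => exact hg.mul_left hh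
  | inv g _ hg => exact hg.inv_left

lemma val_le_iff_of_mem_parab {J : Finset (Fin (n - 1))} {x : Perm (Fin n)}
    (hx : x ∈ parab n J) {c : ℕ} (hc : ∀ i ∈ J, (i : ℕ) ≠ c) (y : Fin n) :
    (y : ℕ) ≤ c ↔ (x y : ℕ) ≤ c := by
  induction hx using Subgroup.closure_induction generalizing y with
  | mem g hg =>
    obtain ⟨i, hi, rfl⟩ := hg
    have := hc i hi
    rw [val_s_apply]
    split_ifs <;> omega
  | one => simp
  | mul g h _ _ hg hh => exact (hh y).trans (hg (h y))
  | inv g _ hg => simpa using (hg (g⁻¹ y)).symm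

lemma mem_of_mem_parab_of_gt {J : Finset (Fin (n - 1))} {x : Perm (Fin n)} {i : Fin (n - 1)}
    (hx : x ∈ parab n J) (h : x (upper i) < x (lower i)) : i ∈ J := by
  by_contra hi
  have hcut := val_le_iff_of_mem_parab hx (c := i) fun j hj hji => hi (Fin.ext hji ▸ hj)
  have h₁ := (hcut (lower i)).1 (by simp)
  have h₂ := (hcut (upper i)).not.1 (by simp)
  rw [Fin.lt_def] at h
  omega

theorem len_mul_of_mem_parab {J : Finset (Fin (n - 1))} {y u : Perm (Fin n)}
    (hy : y ∈ parab n J) (hu : ∀ i ∈ J, u⁻¹ (lower i) < u⁻¹ (upper i)) :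
    len n (y * u) = len n y + len n u := by
  induction hk : len n y using Nat.strong_induction_on generalizing y with
  | _ k ih =>
    rcases eq_or_ne y 1 with rfl | hy1
    · simp [← hk]
    obtain ⟨j, hj⟩ := exists_lt_of_ne_one (inv_ne_one.2 hy1)
    have hjJ : j ∈ J := mem_of_mem_parab_of_gt (inv_mem hy) hj
    set y' := s n j * y with hy'
    have hy'mem : y' ∈ parab n J := mul_mem (s_mem_parab hjJ) hy
    have hlen : len n y' + 1 = len n y := len_s_mul_of_gt hj
    have hyy' : y = s n j * y' := by simp [hy', ← mul_assoc]
    have hIH := ih _ (by omega) hy'mem rfl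
    -- `u⁻¹` increases across the `J`-block containing `y'⁻¹ (lower j) < y'⁻¹ (upper j)`
    have hab : y'⁻¹ (lower j) < y'⁻¹ (upper j) := by simpa [hyy', mul_inv_rev] using hj
    have hchain : u⁻¹ (y'⁻¹ (lower j)) < u⁻¹ (y'⁻¹ (upper j)) := by
      refine lt_of_lower_lt_upper _ hab fun i hi hi' => hu i ?_
      by_contra hiJ
      have hcut := val_le_iff_of_mem_parab hy'mem (c := i) fun t ht hti => hiJ (Fin.ext hti ▸ ht)
      have h₁ := (hcut (y'⁻¹ (lower j))).1 (Fin.le_def.1 hi)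
      have h₂ := (hcut (y'⁻¹ (upper j))).not.1
        (by have := Fin.le_def.1 hi'; rw [val_upper] at this; omega)
      simp only [Perm.coe_inv, Equiv.apply_symm_apply, val_lower, val_upper] at h₁ h₂
      have hij : i = j := Fin.ext (by omega)
      exact hiJ (hij ▸ hjJ)
    have hstep : len n (s n j * (y' * u)) = len n (y' * u) + 1 :=
      len_s_mul_of_lt (by simpa [mul_inv_rev] using hchain)
    rw [hyy', mul_assoc, hstep, hIH]
    omega

theorem isShort_iff {J : Finset (Fin (n - 1))} {u : Perm (Fin n)} :
    IsShort n J u ↔ ∀ i ∈ J, u⁻¹ (lower i) < u⁻¹ (upper i) := by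
  refine ⟨fun hu i hi => ?_, fun hu x hx => by rw [len_mul_of_mem_parab hx hu]; omega⟩
  refine (apply_lower_lt_or_apply_upper_lt u⁻¹ i).resolve_right fun h => ?_
  have := hu _ (s_mem_parab hi)
  have := len_s_mul_of_gt h
  omega

lemma IsShort.len_s_mul {J : Finset (Fin (n - 1))} {u : Perm (Fin n)} (hu : IsShort n J u)
    {i : Fin (n - 1)} (hi : i ∈ J) : len n (s n i * u) = len n u + 1 :=
  len_s_mul_of_lt (isShort_iff.1 hu i hi)

lemma IsShort.mono {J J' : Finset (Fin (n - 1))} (h : J ⊆ J') {u : Perm (Fin n)}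
    (hu : IsShort n J' u) : IsShort n J u :=
  isShort_iff.2 fun i hi => isShort_iff.1 hu i (h hi)

lemma isShort_one (J : Finset (Fin (n - 1))) : IsShort n J 1 := fun x _ => by simp

lemma eq_one_of_isShort_of_mem_parab {J : Finset (Fin (n - 1))} {u : Perm (Fin n)}
    (hu : IsShort n J u) (hJ : u ∈ parab n J) : u = 1 :=
  eq_one_of_len_eq_zero (by simpa using hu u⁻¹ (inv_mem hJ))

lemma len_wordProd_of_len_mul {l : List (Fin (n - 1))} {u : Perm (Fin n)}
    (h : len n (wordProd n l * u) = l.length + len n u) : len n (wordProd n l) = l.length := by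
  have := len_mul_le (wordProd n l) u
  have := len_wordProd_le (n := n) l
  omega

theorem exists_wordProd_mul_isShort (J : Finset (Fin (n - 1))) (v : Perm (Fin n)) :
    ∃ l u, (∀ i ∈ l, i ∈ J) ∧ IsShort n J u ∧ v = wordProd n l * u ∧
      len n v = l.length + len n u := by
  induction hk : len n v using Nat.strong_induction_on generalizing v with
  | _ k ih =>
    by_cases hv : IsShort n J v
    · exact ⟨[], v, by simp, hv, by simp [wordProd_nil], by simp [hk]⟩
    obtain ⟨i, hiJ, hi⟩ : ∃ i ∈ J, v⁻¹ (upper i) < v⁻¹ (lower i) := by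
      simp only [isShort_iff, not_forall] at hv
      obtain ⟨i, hiJ, hi⟩ := hv
      exact ⟨i, hiJ, (apply_lower_lt_or_apply_upper_lt v⁻¹ i).resolve_left hi⟩
    have hlen := len_s_mul_of_gt hi
    obtain ⟨l, u, hl, hu, hveq, hsum⟩ := ih _ (by omega) (s n i * v) rfl
    refine ⟨i :: l, u, ?_, hu, ?_, ?_⟩
    · simpa [hiJ] using hl
    · rw [wordProd_cons, mul_assoc, ← hveq, ← mul_assoc, s_mul_self, one_mul]
    · simp only [List.length_cons]
      omega

lemma exists_wordProd_eq_of_mem_parab {J : Finset (Fin (n - 1))} {x : Perm (Fin n)}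
    (hx : x ∈ parab n J) :
    ∃ l, (∀ i ∈ l, i ∈ J) ∧ wordProd n l = x ∧ l.length = len n x := by
  obtain ⟨l, u, hl, hu, rfl, hlen⟩ := exists_wordProd_mul_isShort J x
  obtain rfl : u = 1 := eq_one_of_isShort_of_mem_parab hu
    (by simpa using mul_mem (inv_mem (wordProd_mem_parab hl)) hx)
  exact ⟨l, hl, mul_one _, by simpa using hlen.symm⟩

/-- A descent of `u` in `Q` would be one of `w = x * u`, because `x ∈ W_P` commutes with `W_Q`
and left multiplication by `x` adds `len n x` to the length. -/
theorem exists_wordProd_mul_isShort_union {P Q : Finset (Fin (n - 1))}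
    (hPQ : ∀ i ∈ P, ∀ j ∈ Q, s n i * s n j = s n j * s n i) {w : Perm (Fin n)}
    (hw : IsShort n Q w) :
    ∃ l u, (∀ i ∈ l, i ∈ P) ∧ IsShort n (P ∪ Q) u ∧ w = wordProd n l * u ∧
      len n w = l.length + len n u := by
  obtain ⟨l, u, hl, hu, rfl, hsum⟩ := exists_wordProd_mul_isShort P w
  refine ⟨l, u, hl, isShort_iff.2 fun j hj => ?_, rfl, hsum⟩
  rcases mem_union.1 hj with hjP | hjQ
  · exact isShort_iff.1 hu j hjP
  refine (apply_lower_lt_or_apply_upper_lt u⁻¹ j).resolve_right fun h => ?_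
  have hcomm : s n j * (wordProd n l * u) = wordProd n l * (s n j * u) := by
    rw [← mul_assoc, ← mul_assoc,
      (commute_s_of_mem_parab (fun i hi => hPQ i hi j hjQ) (wordProd_mem_parab hl)).eq]
  have h₁ := IsShort.len_s_mul hw hjQ
  have h₂ := len_mul_le (wordProd n l) (s n j * u)
  have h₃ := len_s_mul_of_gt h
  have h₄ := len_wordProd_le (n := n) l
  rw [hcomm] at h₁
  omega

/-- Deodhar's lemma. -/
theorem exists_mul_s_eq_s_mul {J : Finset (Fin (n - 1))} {x : Perm (Fin n)} {i : Fin (n - 1)}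
    (hx : IsShort n J x) (hxi : ¬ IsShort n J (x * s n i)) :
    ∃ j ∈ J, x * s n i = s n j * x ∧ len n (x * s n i) = len n x + 1 := by
  simp only [isShort_iff, not_forall, not_lt, mul_inv_rev, s_inv, Perm.mul_apply] at hxi
  obtain ⟨j, hj, hle⟩ := hxi
  have hab := isShort_iff.1 hx j hj
  have hpair : (x⁻¹ (lower j), x⁻¹ (upper j)) = (lower i, upper i) := by
    by_contra hne
    exact (s_apply_lt_s_apply hab hne).not_ge hle
  simp only [Prod.mk.injEq] at hpair
  have hlo : x (lower i) = lower j := by rw [← hpair.1]; simp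
  have hup : x (upper i) = upper j := by rw [← hpair.2]; simp
  refine ⟨j, hj, ?_, len_mul_s_of_lt (by rw [hlo, hup]; exact lower_lt_upper j)⟩
  rw [s_eq_swap j, ← hlo, ← hup, swap_apply_apply, inv_mul_cancel_right, s_eq_swap]

/-! ### Laurent polynomials in `q` -/

lemma q_ne_zero : q ≠ 0 := RatFunc.X_ne_zero

lemma aeval_q_injective : Function.Injective (aeval q : ℤ[X] →ₐ[ℤ] K) :=
  transcendental_iff_injective.1 ((RatFunc.transcendental_X (K := ℂ)).restrictScalars
    (algebraMap ℤ ℂ).injective_int)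

lemma map_aeval_q {barK : K →+* K} (hbarKq : barK q = q⁻¹) (c : ℤ[X]) :
    barK (aeval q c) = aeval q⁻¹ c := by
  rw [aeval_def, aeval_def, hom_eval₂, hbarKq,
    RingHom.ext_int (barK.comp (algebraMap ℤ K)) (algebraMap ℤ K)]

/-- Clearing denominators gives `reflect N c = X ^ (N + 2) * c` with `N = c.natDegree`, which is
impossible for degree reasons unless `c = 0`. -/
lemma eq_zero_of_inv_mul_aeval_inv {c : ℤ[X]} (h : q⁻¹ * aeval q⁻¹ c = q * aeval q c) :
    c = 0 := by
  by_contra hc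
  set N := c.natDegree
  let _ : Invertible (q⁻¹ : K) := invertibleOfNonzero (inv_ne_zero q_ne_zero)
  have hrefl : aeval q (reflect N c) * q⁻¹ ^ N = aeval q⁻¹ c := by
    simpa [aeval_def] using eval₂_reflect_mul_pow (algebraMap ℤ K) q⁻¹ N c le_rfl
  have heq : reflect N c = X ^ (N + 2) * c := by
    apply aeval_q_injective
    have hqN : q ^ N * q⁻¹ ^ N = 1 := by rw [← mul_pow, mul_inv_cancel₀ q_ne_zero, one_pow]
    have hq : q * q⁻¹ = 1 := mul_inv_cancel₀ q_ne_zero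
    rw [← hrefl] at h
    rw [map_mul, map_pow, aeval_X]
    linear_combination q ^ (N + 1) * h - aeval q (reflect N c) * hqN -
      aeval q (reflect N c) * (q ^ N * q⁻¹ ^ N) * hq
  have hdeg := natDegree_reflect_le (N := N) (p := c)
  rw [heq, natDegree_mul (pow_ne_zero _ X_ne_zero) hc, natDegree_X_pow] at hdeg
  omega

lemma neg_q_ne_inv_q : -q ≠ q⁻¹ := by
  intro h
  have h₂ : aeval q (X ^ 2 + 1 : ℤ[X]) = aeval q (0 : ℤ[X]) := by
    rw [map_add, map_pow, aeval_X, map_one, map_zero]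
    linear_combination (-q) * h - mul_inv_cancel₀ q_ne_zero
  simpa using congrArg (eval 0) (aeval_q_injective h₂)

/-! ### The Hecke algebra and its induced modules -/

section SpanBelow

variable {M : Type} [AddCommGroup M] [Module K M]

def spanBelow (N : Perm (Fin n) → M) (k : ℕ) : Submodule K M :=
  Submodule.span K (N '' {v | len n v < k})

lemma mem_spanBelow {N : Perm (Fin n) → M} {k : ℕ} {v : Perm (Fin n)} (hv : len n v < k) :
    N v ∈ spanBelow N k :=
  Submodule.subset_span ⟨v, hv, rfl⟩

lemma spanBelow_mono (N : Perm (Fin n) → M) {k k' : ℕ} (h : k ≤ k') :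
    spanBelow N k ≤ spanBelow N k' :=
  Submodule.span_mono (Set.image_mono fun _ hv => lt_of_lt_of_le hv h)

end SpanBelow

section HeckeAlgebra

variable {A : Type} [Ring A] [Algebra K A]

structure HeckeRelations (H : Perm (Fin n) → A) : Prop where
  one : H 1 = 1
  mul_s : ∀ w i, len n (w * s n i) = len n w + 1 → H (w * s n i) = H w * H (s n i)
  quad : ∀ i, H (s n i) * H (s n i) = (q⁻¹ - q) • H (s n i) + 1

variable {H : Perm (Fin n) → A}

theorem HeckeRelations.mul (hH : HeckeRelations H) {w v : Perm (Fin n)}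
    (h : len n (w * v) = len n w + len n v) : H (w * v) = H w * H v := by
  induction v using len_induction generalizing w with
  | one => simp [hH.one]
  | mul_s v i hv ih =>
    have h₁ := len_mul_le w v
    have h₂ := len_mul_le (w * v) (s n i)
    rw [len_s] at h₂
    rw [← mul_assoc] at h ⊢
    have hwv : len n (w * v) = len n w + len n v := by omega
    rw [hH.mul_s _ _ (by omega), ih hwv, hH.mul_s _ _ hv, mul_assoc]

lemma HeckeRelations.mul_s_of_gt (hH : HeckeRelations H) {w : Perm (Fin n)} {i : Fin (n - 1)}
    (h : len n (w * s n i) + 1 = len n w) :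
    H w * H (s n i) = (q⁻¹ - q) • H w + H (w * s n i) := by
  have hw : H w = H (w * s n i) * H (s n i) := by
    simpa [mul_assoc] using hH.mul_s (w * s n i) i (by simpa [mul_assoc] using h.symm)
  rw [hw, mul_assoc, hH.quad, mul_add, mul_one, mul_smul_comm, ← hw]

lemma HeckeRelations.s_mul_s_add_q (hH : HeckeRelations H) (i : Fin (n - 1)) :
    H (s n i) * (H (s n i) + q • 1) = q⁻¹ • (H (s n i) + q • 1) := by
  rw [mul_add, hH.quad, mul_smul_comm, mul_one, smul_add, smul_smul,
    inv_mul_cancel₀ q_ne_zero, one_smul, sub_smul]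
  abel

lemma HeckeRelations.mul_s_mul_s_add_q (hH : HeckeRelations H) {y : Perm (Fin n)} {i : Fin (n - 1)}
    (hup : len n (y * s n i) = len n y + 1) :
    H (y * s n i) * (H (s n i) + q • 1) = q⁻¹ • (H y * (H (s n i) + q • 1)) := by
  rw [hH.mul_s y i hup, mul_assoc, hH.s_mul_s_add_q, mul_smul_comm]

lemma HeckeRelations.bar_s (hH : HeckeRelations H) {bar : A →+* A}
    (hbar : ∀ w, bar (H w) * H w⁻¹ = 1) (i : Fin (n - 1)) :
    bar (H (s n i)) = H (s n i) + (q - q⁻¹) • 1 := by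
  have hinv : H (s n i) * (H (s n i) + (q - q⁻¹) • 1) = 1 := by
    rw [mul_add, hH.quad, mul_smul_comm, mul_one, add_right_comm, ← add_smul]
    simp
  calc bar (H (s n i))
      = bar (H (s n i)) * (H (s n i) * (H (s n i) + (q - q⁻¹) • 1)) := by rw [hinv, mul_one]
    _ = H (s n i) + (q - q⁻¹) • 1 := by
      rw [← mul_assoc, show bar (H (s n i)) * H (s n i) = 1 by simpa using hbar (s n i), one_mul]

lemma HeckeRelations.mul_s_mem_spanBelow (hH : HeckeRelations H) (i : Fin (n - 1)) {k : ℕ} {a : A}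
    (ha : a ∈ spanBelow H k) : a * H (s n i) ∈ spanBelow H (k + 1) := by
  induction ha using Submodule.span_induction with
  | mem a ha =>
    obtain ⟨v, hv, rfl⟩ := ha
    rcases len_mul_s_eq_or v i with hup | hdown
    · rw [← hH.mul_s v i hup]
      exact mem_spanBelow (by simp at hv; omega)
    · rw [hH.mul_s_of_gt hdown]
      exact add_mem (Submodule.smul_mem _ _ (mem_spanBelow (by simp at hv; omega)))
        (mem_spanBelow (by simp at hv; omega))
  | zero => simp
  | add a b _ _ ha hb => rw [add_mul]; exact add_mem ha hb
  | smul c a _ ha => rw [smul_mul_assoc]; exact Submodule.smul_mem _ _ ha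

theorem HeckeRelations.bar_sub_mem_spanBelow (hH : HeckeRelations H) {bar : A →+* A}
    (hbar : ∀ w, bar (H w) * H w⁻¹ = 1) (w : Perm (Fin n)) :
    bar (H w) - H w ∈ spanBelow H (len n w) := by
  induction w using len_induction with
  | one => simp [hH.one]
  | mul_s v i hv ih =>
    set E := bar (H v) - H v
    have hexp : bar (H (v * s n i)) - H (v * s n i) =
        (q - q⁻¹) • H v + (E * H (s n i) + (q - q⁻¹) • E) := by
      rw [hH.mul_s v i hv, map_mul, hH.bar_s hbar, show bar (H v) = H v + E by simp [E]]
      simp only [add_mul, mul_add, mul_smul_comm, mul_one, smul_add]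
      abel
    rw [hexp, hv]
    exact add_mem (Submodule.smul_mem _ _ (mem_spanBelow (Nat.lt_succ_self _)))
      (add_mem (hH.mul_s_mem_spanBelow i ih)
        (Submodule.smul_mem _ _ (spanBelow_mono H (Nat.le_succ _) ih)))

end HeckeAlgebra

section RightModule

variable {A : Type} [Ring A] [Algebra K A] {H : Perm (Fin n) → A}
  {M : Type} [AddCommGroup M] [Module K M] {V : Type} [AddCommGroup V] [Module K V]
  {act : M → A → M} {actV : V → A → V}

structure IsRightAction (act : M → A → M) : Prop where
  add_right : ∀ m a b, act m (a + b) = act m a + act m b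
  smul_left : ∀ (c : K) m a, act (c • m) a = c • act m a
  smul_right : ∀ (c : K) m a, act m (c • a) = c • act m a
  one : ∀ m, act m 1 = m
  mul : ∀ m a b, act m (a * b) = act (act m a) b

def IsRightAction.orbitMap (hact : IsRightAction act) (m : M) : A →ₗ[K] M where
  toFun := act m
  map_add' := hact.add_right m
  map_smul' c := hact.smul_right c m

@[simp] lemma IsRightAction.orbitMap_apply (hact : IsRightAction act) (m : M) (a : A) :
    hact.orbitMap m a = act m a := rfl

lemma IsRightAction.act_H_wordProd (hact : IsRightAction act) (hH : HeckeRelations H) {ξ : M}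
    {χ : Fin (n - 1) → K} {l : List (Fin (n - 1))} (hξ : ∀ i ∈ l, act ξ (H (s n i)) = χ i • ξ)
    (hl : len n (wordProd n l) = l.length) :
    act ξ (H (wordProd n l)) = (l.map χ).prod • ξ := by
  induction l with
  | nil => simp [wordProd_nil, hH.one, hact.one]
  | cons i l ih =>
    have h₁ := len_wordProd_le (n := n) l
    have h₂ := len_mul_le (s n i) (wordProd n l)
    rw [wordProd_cons, List.length_cons] at hl
    rw [len_s] at h₂
    rw [wordProd_cons, hH.mul (by rw [len_s]; omega), hact.mul, hξ i (by simp), hact.smul_left,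
      ih (fun j hj => hξ j (by simp [hj])) (by omega), smul_smul, List.map_cons, List.prod_cons]

lemma IsRightAction.act_H_wordProd_mul (hact : IsRightAction act) (hH : HeckeRelations H)
    {ξ : M} {χ : Fin (n - 1) → K} {l : List (Fin (n - 1))} {u : Perm (Fin n)}
    (hξ : ∀ i ∈ l, act ξ (H (s n i)) = χ i • ξ)
    (h : len n (wordProd n l * u) = l.length + len n u) :
    act ξ (H (wordProd n l * u)) = (l.map χ).prod • act ξ (H u) := by
  have hl := len_wordProd_of_len_mul h
  rw [hH.mul (by rw [h, hl]), hact.mul, hact.act_H_wordProd hH hξ hl, hact.smul_left]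

lemma IsRightAction.exists_eq_act (hact : IsRightAction act) {N : Perm (Fin n) → M}
    (hN : ∀ w, N w = act (N 1) (H w)) {S : Set (Perm (Fin n))}
    (hspan : Submodule.span K (N '' S) = ⊤) (m : M) : ∃ b, m = act (N 1) b := by
  have hle : Submodule.span K (N '' S) ≤ LinearMap.range (hact.orbitMap (N 1)) :=
    Submodule.span_le.2 (by rintro _ ⟨w, -, rfl⟩; exact ⟨H w, (hN w).symm⟩)
  obtain ⟨b, hb⟩ := (hspan ▸ hle) (Submodule.mem_top (x := m))
  exact ⟨b, hb.symm⟩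

theorem IsRightAction.map_act_of_map_N (hact : IsRightAction act) (hactV : IsRightAction actV)
    (hH : HeckeRelations H) (hHspan : Submodule.span K (Set.range H) = ⊤)
    {N : Perm (Fin n) → M} {J : Finset (Fin (n - 1))} {χ : Fin (n - 1) → K}
    (hN : ∀ w, N w = act (N 1) (H w)) (hχ : ∀ i ∈ J, act (N 1) (H (s n i)) = χ i • N 1)
    (hspan : Submodule.span K (N '' {w | IsShort n J w}) = ⊤)
    {ξ : V} (hξ : ∀ i ∈ J, actV ξ (H (s n i)) = χ i • ξ)
    {f : M →ₗ[K] V} (hf : ∀ u, IsShort n J u → f (N u) = actV ξ (H u)) (m : M) (a : A) :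
    f (act m a) = actV (f m) a := by
  have hfN (v : Perm (Fin n)) : f (N v) = actV ξ (H v) := by
    obtain ⟨l, u, hl, hu, rfl, hlen⟩ := exists_wordProd_mul_isShort J v
    rw [hN, hact.act_H_wordProd_mul hH (fun i hi => hχ i (hl i hi)) hlen, ← hN, map_smul,
      hf u hu, hactV.act_H_wordProd_mul hH (fun i hi => hξ i (hl i hi)) hlen]
  have hfA : f ∘ₗ hact.orbitMap (N 1) = hactV.orbitMap ξ :=
    LinearMap.ext_on_range hHspan fun v => by simp [← hN, hfN]
  have hfA' (b : A) : f (act (N 1) b) = actV ξ b := by simpa using LinearMap.congr_fun hfA b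
  obtain ⟨b, rfl⟩ := hact.exists_eq_act hN hspan m
  rw [← hact.mul, hfA', hfA', hactV.mul]

lemma IsRightAction.map_bar (hact : IsRightAction act) {N : Perm (Fin n) → M}
    (hN : ∀ w, N w = act (N 1) (H w)) {S : Set (Perm (Fin n))}
    (hspan : Submodule.span K (N '' S) = ⊤) {bar : A →+* A} {barM : M → M} {barV : V → V}
    (hbarM : ∀ m a, barM (act m a) = act (barM m) (bar a)) (hbarM1 : barM (N 1) = N 1)
    (hbarV : ∀ v a, barV (actV v a) = actV (barV v) (bar a))
    {f : M →ₗ[K] V} (hf : ∀ m a, f (act m a) = actV (f m) a) (hf1 : barV (f (N 1)) = f (N 1))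
    (m : M) : f (barM m) = barV (f m) := by
  obtain ⟨b, rfl⟩ := hact.exists_eq_act hN hspan m
  rw [hbarM, hbarM1, hf, hf, hbarV, hf1]

/-- The universal property of the module induced from the character `χ` of `H_J`. -/
theorem IsRightAction.existsUnique_map_act (hact : IsRightAction act)
    (hactV : IsRightAction actV) (hH : HeckeRelations H)
    (hHspan : Submodule.span K (Set.range H) = ⊤) {N : Perm (Fin n) → M}
    {J : Finset (Fin (n - 1))} {χ : Fin (n - 1) → K}
    (hN : ∀ w, N w = act (N 1) (H w)) (hχ : ∀ i ∈ J, act (N 1) (H (s n i)) = χ i • N 1)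
    (hli : LinearIndependent K (fun w : {w // IsShort n J w} => N w))
    (hspan : Submodule.span K (N '' {w | IsShort n J w}) = ⊤)
    {ξ : V} (hξ : ∀ i ∈ J, actV ξ (H (s n i)) = χ i • ξ) :
    ∃! f : M →ₗ[K] V, (∀ m a, f (act m a) = actV (f m) a) ∧ f (N 1) = ξ := by
  let b := Module.Basis.mk hli (by rw [← hspan, Set.image_eq_range]; exact le_rfl)
  let f := b.constr K fun u => actV ξ (H u)
  have hf (u : Perm (Fin n)) (hu : IsShort n J u) : f (N u) = actV ξ (H u) := by
    have := b.constr_basis K (fun u => actV ξ (H u)) ⟨u, hu⟩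
    rwa [Module.Basis.mk_apply] at this
  refine ⟨f, ⟨hact.map_act_of_map_N hactV hH hHspan hN hχ hspan hξ hf,
    by rw [hf 1 (isShort_one J), hH.one, hactV.one]⟩, ?_⟩
  rintro g ⟨hg, hg1⟩
  refine b.ext fun u => ?_
  rw [Module.Basis.mk_apply, hN, hg, hg1, ← hN, hf u u.2]

end RightModule

section InducedModule

variable {A : Type} [Ring A] [Algebra K A] {H : Perm (Fin n) → A}
  {M : Type} [AddCommGroup M] [Module K M] {act : M → A → M} {N : Perm (Fin n) → M}

lemma IsRightAction.act_H_mul_of_mem_parab (hact : IsRightAction act) (hH : HeckeRelations H)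
    {ξ : M} {P : Finset (Fin (n - 1))} {c : K} (hξ : ∀ i ∈ P, act ξ (H (s n i)) = c • ξ)
    {x u : Perm (Fin n)} (hx : x ∈ parab n P) (hu : IsShort n P u) :
    act ξ (H (x * u)) = c ^ len n x • act ξ (H u) := by
  obtain ⟨l, hl, rfl, hlen⟩ := exists_wordProd_eq_of_mem_parab hx
  rw [hact.act_H_wordProd_mul hH (χ := fun _ => c) (fun i hi => hξ i (hl i hi))
    (by rw [len_mul_of_mem_parab (wordProd_mem_parab hl) (isShort_iff.1 hu), hlen]), ← hlen]
  simp [List.map_const', List.prod_replicate]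

lemma IsRightAction.exists_N_eq_smul_N (hact : IsRightAction act) (hH : HeckeRelations H)
    (hN : ∀ w, N w = act (N 1) (H w)) {J : Finset (Fin (n - 1))} {χ : Fin (n - 1) → K}
    (hχ : ∀ i ∈ J, act (N 1) (H (s n i)) = χ i • N 1) (v : Perm (Fin n)) :
    ∃ (c : K) (u : Perm (Fin n)), IsShort n J u ∧ len n u ≤ len n v ∧ N v = c • N u := by
  obtain ⟨l, u, hl, hu, rfl, hlen⟩ := exists_wordProd_mul_isShort J v
  exact ⟨_, u, hu, by omega,
    by rw [hN, hact.act_H_wordProd_mul hH (fun i hi => hχ i (hl i hi)) hlen, ← hN]⟩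

lemma IsRightAction.exists_N_eq_neg_q_pow_smul (hact : IsRightAction act) (hH : HeckeRelations H)
    (hN : ∀ w, N w = act (N 1) (H w)) {P Q : Finset (Fin (n - 1))}
    (hgenP : ∀ i ∈ P, act (N 1) (H (s n i)) = (-q) • N 1)
    (hPQ : ∀ i ∈ P, ∀ j ∈ Q, s n i * s n j = s n j * s n i) {w : Perm (Fin n)}
    (hw : IsShort n Q w) :
    ∃ (e : ℕ) (u : Perm (Fin n)), IsShort n (P ∪ Q) u ∧ N w = (-q) ^ e • N u ∧ (e = 0 → w = u) := by
  obtain ⟨l, u, hl, hu, rfl, -⟩ := exists_wordProd_mul_isShort_union hPQ hw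
  refine ⟨len n (wordProd n l), u, hu, ?_, fun h => by rw [eq_one_of_len_eq_zero h, one_mul]⟩
  rw [hN, hact.act_H_mul_of_mem_parab hH hgenP (wordProd_mem_parab hl)
    (IsShort.mono subset_union_left hu), ← hN]

lemma IsRightAction.bar_N_sub_mem_spanBelow (hact : IsRightAction act) (hH : HeckeRelations H)
    {bar : A →+* A} (hbar : ∀ w, bar (H w) * H w⁻¹ = 1) (hN : ∀ w, N w = act (N 1) (H w))
    {barM : M → M} (hbar_act : ∀ m a, barM (act m a) = act (barM m) (bar a))
    (hbar_one : barM (N 1) = N 1) (u : Perm (Fin n)) :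
    barM (N u) - N u ∈ spanBelow N (len n u) := by
  have hle : (spanBelow H (len n u)).map (hact.orbitMap (N 1)) ≤ spanBelow N (len n u) := by
    rw [spanBelow, Submodule.map_span, ← Set.image_comp]
    exact Submodule.span_mono fun _ ⟨v, hv, he⟩ =>
      ⟨v, hv, by rw [← he, Function.comp_apply, hact.orbitMap_apply, ← hN]⟩
  have hbarN : barM (N u) = act (N 1) (bar (H u)) := by rw [hN u, hbar_act, hbar_one]
  have := hle (Submodule.mem_map_of_mem (hH.bar_sub_mem_spanBelow hbar u))
  rwa [map_sub, hact.orbitMap_apply, hact.orbitMap_apply, ← hN u, ← hbarN] at this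

lemma IsRightAction.act_N_s_of_mul_s_eq (hact : IsRightAction act) (hH : HeckeRelations H)
    (hN : ∀ w, N w = act (N 1) (H w)) {x : Perm (Fin n)} {i j : Fin (n - 1)}
    (heq : x * s n i = s n j * x) (hlen : len n (x * s n i) = len n x + 1) {c : K}
    (hc : act (N 1) (H (s n j)) = c • N 1) : act (N x) (H (s n i)) = c • N x := by
  rw [hN x, ← hact.mul, ← hH.mul_s x i hlen, heq, hH.mul (by rw [← heq, hlen, len_s]; omega),
    hact.mul, hc, hact.smul_left, ← hN]

lemma IsRightAction.act_act_sum (hact : IsRightAction act) (hN : ∀ w, N w = act (N 1) (H w))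
    (D : Finset (Perm (Fin n))) (c : Perm (Fin n) → K) (a : A) :
    act (act (N 1) (∑ x ∈ D, c x • H x)) a = ∑ x ∈ D, c x • act (N x) a := by
  rw [← hact.mul, sum_mul, ← hact.orbitMap_apply, map_sum]
  refine sum_congr rfl fun x _ => ?_
  rw [orbitMap_apply, smul_mul_assoc, hact.smul_right, hact.mul, ← hN]

end InducedModule

/-! ### The maps `z` and `j` -/

section QLattice

variable {M : Type} [AddCommGroup M] [Module K M]

/-- The `q ℤ[q]`-span of the standard basis. -/
def qLattice (N : Perm (Fin n) → M) (J : Finset (Fin (n - 1))) : AddSubgroup M where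
  carrier := {m | ∃ c : Perm (Fin n) → ℤ[X], (∀ u, ¬ IsShort n J u → c u = 0) ∧
    m = ∑ u, (q * aeval q (c u)) • N u}
  add_mem' := by
    rintro _ _ ⟨c, hc, rfl⟩ ⟨d, hd, rfl⟩
    exact ⟨c + d, fun u hu => by simp [hc u hu, hd u hu],
      by simp [mul_add, add_smul, sum_add_distrib]⟩
  zero_mem' := ⟨0, fun _ _ => rfl, by simp⟩
  neg_mem' := by
    rintro _ ⟨c, hc, rfl⟩
    exact ⟨-c, fun u hu => by simp [hc u hu], by simp [neg_smul, sum_neg_distrib]⟩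

lemma smul_mem_qLattice {N : Perm (Fin n) → M} {J : Finset (Fin (n - 1))} {u : Perm (Fin n)}
    (hu : IsShort n J u) (c : ℤ[X]) : (q * aeval q c) • N u ∈ qLattice N J :=
  ⟨fun v => if v = u then c else 0, fun v hv => if_neg (by rintro rfl; exact hv hu),
    by rw [sum_eq_single u (fun v _ hv => by simp [hv]) (by simp)]; simp⟩

lemma coord_N {N : Perm (Fin n) → M} {J : Finset (Fin (n - 1))}
    {b : Module.Basis {w // IsShort n J w} K M} (hb : ∀ w, b w = N w)
    (u₀ : {w // IsShort n J w}) {u : Perm (Fin n)} (hu : IsShort n J u) :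
    b.coord u₀ (N u) = if u = u₀ then 1 else 0 := by
  rw [← hb ⟨u, hu⟩, Module.Basis.coord_apply, b.repr_self, Finsupp.single_apply]
  simp [Subtype.ext_iff]

lemma coord_bar_N {N : Perm (Fin n) → M} {J : Finset (Fin (n - 1))}
    {b : Module.Basis {w // IsShort n J w} K M} (hb : ∀ w, b w = N w)
    (hdecomp : ∀ v, ∃ (c : K) (u : Perm (Fin n)), IsShort n J u ∧ len n u ≤ len n v ∧
      N v = c • N u)
    {barM : M → M} (hbarN : ∀ u, IsShort n J u → barM (N u) - N u ∈ spanBelow N (len n u))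
    (u₀ : {w // IsShort n J w}) {u : Perm (Fin n)} (hu : IsShort n J u)
    (hlen : len n u ≤ len n u₀) : b.coord u₀ (barM (N u)) = b.coord u₀ (N u) := by
  have hker : spanBelow N (len n u₀) ≤ LinearMap.ker (b.coord u₀) := Submodule.span_le.2 <| by
    rintro _ ⟨v, hv, rfl⟩
    obtain ⟨d, u, hu, hlen, hNv⟩ := hdecomp v
    have hne : u ≠ u₀ := by rintro rfl; exact (hlen.trans_lt hv).false
    simp [hNv, coord_N hb u₀ hu, hne]
  exact sub_eq_zero.1 (by simpa using hker (spanBelow_mono N hlen (hbarN u hu)))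

/-- The standard basis is unitriangular for the bar involution, so a bar-invariant element of the
lattice has a bar-invariant leading coefficient in `q ℤ[q]`, which must vanish. -/
theorem eq_zero_of_mem_qLattice_of_bar_eq {N : Perm (Fin n) → M} {J : Finset (Fin (n - 1))}
    (hli : LinearIndependent K (fun w : {w // IsShort n J w} => N w))
    (hspan : Submodule.span K (N '' {w | IsShort n J w}) = ⊤)
    (hdecomp : ∀ v, ∃ (c : K) (u : Perm (Fin n)), IsShort n J u ∧ len n u ≤ len n v ∧
      N v = c • N u)
    {barK : K →+* K} (hbarKq : barK q = q⁻¹) {barM : M → M}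
    (hbar_add : ∀ m m', barM (m + m') = barM m + barM m')
    (hbar_smul : ∀ (c : K) m, barM (c • m) = barK c • barM m)
    (hbarN : ∀ u, IsShort n J u → barM (N u) - N u ∈ spanBelow N (len n u))
    {m : M} (hm : m ∈ qLattice N J) (hbar : barM m = m) : m = 0 := by
  obtain ⟨c, hc, rfl⟩ := hm
  suffices ∀ u, c u = 0 by simp [this]
  by_contra! hne
  obtain ⟨u₀, hu₀, hmax⟩ := (univ.filter fun u => c u ≠ 0).exists_max_image (len n)
    (by obtain ⟨u, hu⟩ := hne; exact ⟨u, by simpa using hu⟩)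
  simp only [mem_filter, mem_univ, true_and] at hu₀ hmax
  have hshort (u : Perm (Fin n)) (hcu : c u ≠ 0) : IsShort n J u := by_contra fun h => hcu (hc u h)
  let β : M →+ M := AddMonoidHom.mk' barM hbar_add
  have hβ (m : M) : β m = barM m := rfl
  let b := Module.Basis.mk hli (by rw [← hspan, Set.image_eq_range]; exact le_rfl)
  have hb (w : {w // IsShort n J w}) : b w = N w := Module.Basis.mk_apply _ _ _
  let f := b.coord ⟨u₀, hshort u₀ hu₀⟩
  have hsum (g : Perm (Fin n) → K) (hg : ∀ u, c u = 0 → g u = 0) :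
      ∑ u, g u * f (N u) = g u₀ := by
    rw [sum_eq_single u₀ (fun u _ hu => ?_) (by simp), coord_N hb _ (hshort u₀ hu₀), if_pos rfl,
      mul_one]
    by_cases hcu : c u = 0
    · rw [hg u hcu, zero_mul]
    · rw [coord_N hb _ (hshort u hcu), if_neg hu, mul_zero]
  have hcoeff : barK (q * aeval q (c u₀)) = q * aeval q (c u₀) := by
    have := congrArg f hbar
    rw [← hβ, map_sum, map_sum, map_sum] at this
    convert this using 1
    · rw [← hsum (fun u => barK (q * aeval q (c u))) fun u hcu => by simp [hcu]]
      refine sum_congr rfl fun u _ => ?_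
      by_cases hcu : c u = 0
      · simp [hcu]
      rw [hβ, hbar_smul, map_smul, coord_bar_N hb hdecomp hbarN _ (hshort u hcu) (hmax u hcu),
        smul_eq_mul]
    · rw [← hsum (fun u => q * aeval q (c u)) fun u hcu => by simp [hcu]]
      simp
  rw [map_mul, hbarKq, map_aeval_q hbarKq] at hcoeff
  exact hu₀ (eq_zero_of_inv_mul_aeval_inv hcoeff)

end QLattice

lemma disjoint_of_smul_neg_q_of_smul_inv_q {M : Type} [AddCommGroup M] [Module K M]
    {P Q : Finset (Fin (n - 1))} {f : Fin (n - 1) → M} {v : M} (hv : v ≠ 0)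
    (hP : ∀ i ∈ P, f i = (-q) • v) (hQ : ∀ i ∈ Q, f i = q⁻¹ • v) : Disjoint P Q :=
  disjoint_left.2 fun i hiP hiQ =>
    neg_q_ne_inv_q (smul_left_injective K hv ((hP i hiP).symm.trans (hQ i hiQ)))

/-- The character of `sgn_P ⊠ trv_Q`, extended by `q⁻¹` off `P`. -/
def sgnTrvChar (P : Finset (Fin (n - 1))) (i : Fin (n - 1)) : K := if i ∈ P then -q else q⁻¹

lemma eq_sgnTrvChar_smul {M : Type} [AddCommGroup M] [Module K M] {P P' Q : Finset (Fin (n - 1))}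
    (hP'P : P' ⊆ P) (hPQ : Disjoint P Q) {f : Fin (n - 1) → M} {v : M}
    (hP' : ∀ i ∈ P', f i = (-q) • v) (hQ : ∀ i ∈ Q, f i = q⁻¹ • v) :
    ∀ i ∈ P' ∪ Q, f i = sgnTrvChar P i • v := by
  intro i hi
  rcases mem_union.1 hi with h | h
  · rw [hP' i h, sgnTrvChar, if_pos (hP'P h)]
  · rw [hQ i h, sgnTrvChar, if_neg fun hP => disjoint_left.1 hPQ hP h]

def shortReps (P P' : Finset (Fin (n - 1))) : Finset (Perm (Fin n)) :=
  {x | x ∈ parab n P ∧ IsShort n P' x}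

lemma mem_shortReps {P P' : Finset (Fin (n - 1))} {x : Perm (Fin n)} :
    x ∈ shortReps P P' ↔ x ∈ parab n P ∧ IsShort n P' x := by
  simp [shortReps]

lemma coe_shortReps (P P' : Finset (Fin (n - 1))) :
    (shortReps P P' : Set (Perm (Fin n))) =
      {x | x ∈ parab n P ∧ ∀ y ∈ parab n P', len n x ≤ len n (y * x)} := by
  ext x
  simp [mem_shortReps, IsShort]

lemma sum_q_pow_two_mul_len_ne_zero (P P' : Finset (Fin (n - 1))) :
    ∑ x ∈ shortReps P P', q ^ (2 * len n x) ≠ 0 := by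
  have h1 : (1 : Perm (Fin n)) ∈ shortReps P P' := mem_shortReps.2 ⟨one_mem _, isShort_one P'⟩
  intro h
  have h₂ : aeval q (∑ x ∈ shortReps P P', (X : ℤ[X]) ^ (2 * len n x)) = aeval q (0 : ℤ[X]) := by
    simpa using h
  have := congrArg (eval 1) (aeval_q_injective h₂)
  simp only [eval_finsetSum, eval_pow, eval_X, one_pow, sum_const, eval_zero] at this
  simp_all

section Intertwiner

variable {A : Type} [Ring A] [Algebra K A] {H : Perm (Fin n) → A}
  {M : Type} [AddCommGroup M] [Module K M] {act : M → A → M} {N : Perm (Fin n) → M}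
  {P P' Q : Finset (Fin (n - 1))}

lemma IsRightAction.smul_act_N_add_smul_act_N_mul_s (hact : IsRightAction act)
    (hH : HeckeRelations H) (hN : ∀ w, N w = act (N 1) (H w)) {y : Perm (Fin n)} {i : Fin (n - 1)}
    (hup : len n (y * s n i) = len n y + 1) :
    (-q) ^ len n y • act (N y) (H (s n i) + q • 1) +
      (-q) ^ len n (y * s n i) • act (N (y * s n i)) (H (s n i) + q • 1) = 0 := by
  have hc : (-q) ^ len n y + (-q) ^ (len n y + 1) * q⁻¹ = 0 := by
    rw [pow_succ, mul_assoc, neg_mul, mul_inv_cancel₀ q_ne_zero]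
    ring
  rw [hN (y * s n i), ← hact.mul, hH.mul_s_mul_s_add_q hup, hact.smul_right, hact.mul, ← hN,
    hup, smul_smul, ← add_smul, hc, zero_smul]

/-- Pairing `x` with `x * s n i` inside `shortReps P P'` cancels terms; the unpaired `x` are
killed by Deodhar's lemma. -/
theorem IsRightAction.sum_shortReps_act_s_add_q (hact : IsRightAction act)
    (hH : HeckeRelations H) (hN : ∀ w, N w = act (N 1) (H w))
    (hgenP' : ∀ j ∈ P', act (N 1) (H (s n j)) = (-q) • N 1) {i : Fin (n - 1)} (hi : i ∈ P) :
    ∑ x ∈ shortReps P P', (-q) ^ len n x • act (N x) (H (s n i) + q • 1) = 0 := by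
  set D := shortReps P P'
  set f := fun x => (-q) ^ len n x • act (N x) (H (s n i) + q • 1)
  have hpair (y : Perm (Fin n)) (hup : len n (y * s n i) = len n y + 1) :
      f y + f (y * s n i) = 0 :=
    hact.smul_act_N_add_smul_act_N_mul_s hH hN hup
  have hbad (x : Perm (Fin n)) (hx : x ∈ D) (hxs : x * s n i ∉ D) : f x = 0 := by
    obtain ⟨hxP, hxsh⟩ := mem_shortReps.1 hx
    obtain ⟨j, hj, heq, hlen⟩ := exists_mul_s_eq_s_mul hxsh
      fun h => hxs (mem_shortReps.2 ⟨mul_mem hxP (s_mem_parab hi), h⟩)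
    simp only [f]
    rw [hact.add_right, hact.smul_right, hact.one,
      hact.act_N_s_of_mul_s_eq hH hN heq hlen (hgenP' j hj), neg_smul, neg_add_cancel, smul_zero]
  refine sum_involution (fun x _ => if x * s n i ∈ D then x * s n i else x)
    (fun x hx => ?_) (fun x hx hfx => ?_) (fun x hx => ?_) (fun x hx => ?_)
  · split_ifs with hxs
    · rcases len_mul_s_eq_or x i with hup | hdown
      · exact hpair x hup
      · simpa [mul_assoc, add_comm] using hpair (x * s n i) (by simpa [mul_assoc] using hdown.symm)
    · change f x + f x = 0
      rw [hbad x hx hxs, add_zero]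
  · split_ifs with hxs
    · exact fun h => by simpa using congrArg (len n) (mul_eq_left.1 h)
    · exact absurd (hbad x hx hxs) hfx
  · split_ifs with hxs
    exacts [hxs, hx]
  · by_cases hxs : x * s n i ∈ D <;> simp [hxs, mul_assoc, hx]

theorem IsRightAction.act_sum_shortReps_H_s (hact : IsRightAction act) (hH : HeckeRelations H)
    (hN : ∀ w, N w = act (N 1) (H w))
    (hgenP' : ∀ j ∈ P', act (N 1) (H (s n j)) = (-q) • N 1)
    (hgenQ : ∀ j ∈ Q, act (N 1) (H (s n j)) = q⁻¹ • N 1)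
    (hPQ : ∀ i ∈ P, ∀ j ∈ Q, s n i * s n j = s n j * s n i) (hdisj : Disjoint P Q) :
    ∀ i ∈ P ∪ Q, act (act (N 1) (∑ x ∈ shortReps P P', (-q) ^ len n x • H x)) (H (s n i)) =
      sgnTrvChar P i • act (N 1) (∑ x ∈ shortReps P P', (-q) ^ len n x • H x) := by
  set ξ := act (N 1) (∑ x ∈ shortReps P P', (-q) ^ len n x • H x)
  intro i hi
  rcases mem_union.1 hi with hiP | hiQ
  · have h := hact.sum_shortReps_act_s_add_q hH hN hgenP' hiP
    rw [← hact.act_act_sum hN, hact.add_right, hact.smul_right, hact.one] at h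
    rw [sgnTrvChar, if_pos hiP, neg_smul, eq_neg_of_add_eq_zero_left h]
  · have hξ : ξ = ∑ x ∈ shortReps P P', (-q) ^ len n x • N x := by
      simpa [hact.one] using hact.act_act_sum hN (shortReps P P') (fun x => (-q) ^ len n x) 1
    rw [sgnTrvChar, if_neg fun hiP => disjoint_left.1 hdisj hiP hiQ, hact.act_act_sum hN, hξ,
      smul_sum]
    refine sum_congr rfl fun x hx => ?_
    have hxP := (mem_shortReps.1 hx).1
    have hlt : x (lower i) < x (upper i) :=
      (apply_lower_lt_or_apply_upper_lt x i).resolve_right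
        fun h => disjoint_left.1 hdisj (mem_of_mem_parab_of_gt hxP h) hiQ
    rw [hact.act_N_s_of_mul_s_eq hH hN
      (commute_s_of_mem_parab (fun j hj => hPQ j hj i hiQ) hxP).eq (len_mul_s_of_lt hlt)
      (hgenQ i hiQ), smul_comm]

variable {M' : Type} [AddCommGroup M'] [Module K M'] {act' : M' → A → M'}
  {N' : Perm (Fin n) → M'}

theorem IsRightAction.map_act_of_map_N_eq_sum (hact : IsRightAction act)
    (hact' : IsRightAction act') (hH : HeckeRelations H)
    (hHspan : Submodule.span K (Set.range H) = ⊤) (hN : ∀ w, N w = act (N 1) (H w))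
    (hχ : ∀ i ∈ P ∪ Q, act (N 1) (H (s n i)) = sgnTrvChar P i • N 1)
    (hspan : Submodule.span K (N '' {w | IsShort n (P ∪ Q) w}) = ⊤)
    (hN' : ∀ w, N' w = act' (N' 1) (H w))
    (hgenP' : ∀ j ∈ P', act' (N' 1) (H (s n j)) = (-q) • N' 1)
    (hgenQ' : ∀ j ∈ Q, act' (N' 1) (H (s n j)) = q⁻¹ • N' 1)
    (hPQ : ∀ i ∈ P, ∀ j ∈ Q, s n i * s n j = s n j * s n i) (hdisj : Disjoint P Q)
    {φ : M →ₗ[K] M'} (hφ : ∀ w, IsShort n (P ∪ Q) w →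
      φ (N w) = ∑ x ∈ shortReps P P', (-q) ^ len n x • N' (x * w))
    (m : M) (a : A) : φ (act m a) = act' (φ m) a := by
  refine hact.map_act_of_map_N hact' hH hHspan hN hχ hspan
    (hact'.act_sum_shortReps_H_s hH hN' hgenP' hgenQ' hPQ hdisj) (fun w hw => ?_) m a
  rw [hφ w hw, hact'.act_act_sum hN']
  refine sum_congr rfl fun x hx => ?_
  rw [hN' (x * w), hH.mul (len_mul_of_mem_parab (mem_shortReps.1 hx).1
    (isShort_iff.1 (IsShort.mono subset_union_left hw))), hact'.mul, ← hN']

theorem IsRightAction.comp_eq_smul_id (hact : IsRightAction act) (hH : HeckeRelations H)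
    (hN : ∀ w, N w = act (N 1) (H w)) (hgenP : ∀ i ∈ P, act (N 1) (H (s n i)) = (-q) • N 1)
    (hspan : Submodule.span K (N '' {w | IsShort n (P ∪ Q) w}) = ⊤)
    {z : M' →ₗ[K] M} (hz : ∀ v, z (N' v) = N v) {φ : M →ₗ[K] M'}
    (hφ : ∀ w, IsShort n (P ∪ Q) w →
      φ (N w) = ∑ x ∈ shortReps P P', (-q) ^ len n x • N' (x * w)) :
    z ∘ₗ φ = (∑ x ∈ shortReps P P', q ^ (2 * len n x)) • LinearMap.id := by
  refine LinearMap.ext_on hspan ?_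
  rintro _ ⟨w, hw, rfl⟩
  rw [LinearMap.comp_apply, hφ w hw, LinearMap.smul_apply, LinearMap.id_apply, sum_smul,
    map_sum]
  refine sum_congr rfl fun x hx => ?_
  rw [map_smul, hz, hN, hact.act_H_mul_of_mem_parab hH hgenP (mem_shortReps.1 hx).1
    (IsShort.mono subset_union_left hw), ← hN, smul_smul, ← mul_pow, neg_mul_neg, ← sq,
    ← pow_mul]

end Intertwiner

section CanonicalBasis

variable {M M' : Type} [AddCommGroup M] [Module K M] [AddCommGroup M'] [Module K M']
  {N : Perm (Fin n) → M} {N' : Perm (Fin n) → M'} {J J' : Finset (Fin (n - 1))}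

/-- `z (C' w) - C w`, resp. `z (C' w)`, is a bar-invariant element of the lattice. -/
theorem map_canonBasis {barM : M → M} {barM' : M' → M'}
    (hbar_add : ∀ m m', barM (m + m') = barM m + barM m')
    (hrigid : ∀ m ∈ qLattice N J, barM m = m → m = 0)
    (hdec : ∀ w, IsShort n J' w →
      ∃ (e : ℕ) (u : Perm (Fin n)), IsShort n J u ∧ N w = (-q) ^ e • N u ∧ (e = 0 → w = u))
    {z : M' →ₗ[K] M} (hz : ∀ v, z (N' v) = N v) (hzbar : ∀ m, z (barM' m) = barM (z m))
    {C' : Perm (Fin n) → M'} {C : Perm (Fin n) → M}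
    (hC' : IsCanonBasis n (IsShort n J') N' barM' C')
    (hC : IsCanonBasis n (IsShort n J) N barM C) {w : Perm (Fin n)} (hw : IsShort n J' w) :
    (IsShort n J w → z (C' w) = C w) ∧ (¬ IsShort n J w → z (C' w) = 0) := by
  have hterm (w' : Perm (Fin n)) (hw' : IsShort n J' w') (p : ℤ[X]) :
      (q * aeval q p) • N w' ∈ qLattice N J := by
    obtain ⟨e, u, hu, hNw, -⟩ := hdec w' hw'
    rw [hNw, smul_smul, show q * aeval q p * (-q) ^ e = q * aeval q (p * (-X) ^ e) by
      rw [map_mul, map_pow, map_neg, aeval_X, mul_assoc]]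
    exact smul_mem_qLattice hu _
  obtain ⟨hbar', R', hR', hC'w⟩ := hC' w hw
  have hlat' : ∑ w', (q * aeval q (R' w')) • N w' ∈ qLattice N J := by
    refine sum_mem fun w' _ => ?_
    by_cases hw' : IsShort n J' w'
    · exact hterm w' hw' _
    · simp [hR' w' fun h => hw' h.1]
  have hzC' : z (C' w) = N w + ∑ w', (q * aeval q (R' w')) • N w' := by
    simp [hC'w, hz]
  have hzbar' : barM (z (C' w)) = z (C' w) := by rw [← hzbar, hbar']
  refine ⟨fun hwJ => ?_, fun hwJ => ?_⟩
  · obtain ⟨hbarC, R, hR, hCw⟩ := hC w hwJ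
    have hlat : ∑ w', (q * aeval q (R w')) • N w' ∈ qLattice N J := by
      refine sum_mem fun w' _ => ?_
      by_cases hw' : IsShort n J w'
      · exact smul_mem_qLattice hw' _
      · simp [hR w' fun h => hw' h.1]
    refine sub_eq_zero.1 (hrigid _ ?_ ?_)
    · rw [hzC', hCw, add_sub_add_left_eq_sub]
      exact sub_mem hlat' hlat
    · have := map_sub (AddMonoidHom.mk' barM hbar_add) (z (C' w)) (C w)
      simp only [AddMonoidHom.mk'_apply] at this
      rw [this, hzbar', hbarC]
  · obtain ⟨e, u, hu, hNw, he⟩ := hdec w hw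
    obtain ⟨k, rfl⟩ := Nat.exists_eq_succ_of_ne_zero fun h => hwJ (he h ▸ hu)
    have hNlat : N w ∈ qLattice N J := by
      rw [hNw, show (-q) ^ (k + 1) = q * aeval q (-(-X : ℤ[X]) ^ k) by
        rw [map_neg, map_pow, map_neg, aeval_X, pow_succ]; ring]
      exact smul_mem_qLattice hu _
    exact hrigid _ (hzC' ▸ add_mem hNlat hlat') hzbar'

end CanonicalBasis

end HeckeModule

open HeckeModule Finset in
theorem statement5_general (n : ℕ) (A : Type) [Ring A] [Algebra K A]
    (H : Equiv.Perm (Fin n) → A)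
    (hHspan : Submodule.span K (Set.range H) = ⊤)
    (hone : H 1 = 1)
    (hmul : ∀ (w : Equiv.Perm (Fin n)) (i : Fin (n - 1)),
      len n (w * s n i) = len n w + 1 → H (w * s n i) = H w * H (s n i))
    (hquad : ∀ i : Fin (n - 1),
      H (s n i) * H (s n i) = (q⁻¹ - q) • H (s n i) + 1)
    (barK : K →+* K) (hbarKq : barK q = q⁻¹)
    (bar : A →+* A)
    (hbarH : ∀ w : Equiv.Perm (Fin n),
      bar (H w) * H w⁻¹ = 1 ∧ H w⁻¹ * bar (H w) = 1)
    (P P' Q : Finset (Fin (n - 1)))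
    (hPQ : ∀ i ∈ P, ∀ j ∈ Q, s n i * s n j = s n j * s n i)
    (hP'P : P' ⊆ P)
    -- the module M^p_q
    (M : Type) [AddCommGroup M] [Module K M]
    (act : M → A → M)
    (hact_addrM : ∀ (m : M) (a b : A), act m (a + b) = act m a + act m b)
    (hact_smullM : ∀ (c : K) (m : M) (a : A), act (c • m) a = c • act m a)
    (hact_smulrM : ∀ (c : K) (m : M) (a : A), act m (c • a) = c • act m a)
    (hact_oneM : ∀ m : M, act m 1 = m)
    (hact_mulM : ∀ (m : M) (a b : A), act m (a * b) = act (act m a) b)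
    (N : Equiv.Perm (Fin n) → M)
    (hNM : ∀ w, N w = act (N 1) (H w))
    (hgenPM : ∀ i ∈ P, act (N 1) (H (s n i)) = (-q) • N 1)
    (hgenQM : ∀ i ∈ Q, act (N 1) (H (s n i)) = q⁻¹ • N 1)
    (hNLIM : LinearIndependent K
      (fun w : {w : Equiv.Perm (Fin n) // IsShort n (P ∪ Q) w} => N w))
    (hNspanM : Submodule.span K (N '' {w | IsShort n (P ∪ Q) w}) = ⊤)
    (barM : M → M)
    (hbar_addM : ∀ m m' : M, barM (m + m') = barM m + barM m')
    (hbar_smulM : ∀ (c : K) (m : M), barM (c • m) = barK c • barM m)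
    (hbar_actM : ∀ (m : M) (a : A), barM (act m a) = act (barM m) (bar a))
    (hbar_oneM : barM (N 1) = N 1)
    -- the module M^{p'}_q
    (M' : Type) [AddCommGroup M'] [Module K M']
    (act' : M' → A → M')
    (hact_addrM' : ∀ (m : M') (a b : A), act' m (a + b) = act' m a + act' m b)
    (hact_smullM' : ∀ (c : K) (m : M') (a : A), act' (c • m) a = c • act' m a)
    (hact_smulrM' : ∀ (c : K) (m : M') (a : A), act' m (c • a) = c • act' m a)
    (hact_oneM' : ∀ m : M', act' m 1 = m)
    (hact_mulM' : ∀ (m : M') (a b : A), act' m (a * b) = act' (act' m a) b)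
    (N' : Equiv.Perm (Fin n) → M')
    (hNM' : ∀ w, N' w = act' (N' 1) (H w))
    (hgenPM' : ∀ i ∈ P', act' (N' 1) (H (s n i)) = (-q) • N' 1)
    (hgenQM' : ∀ i ∈ Q, act' (N' 1) (H (s n i)) = q⁻¹ • N' 1)
    (hNLIM' : LinearIndependent K
      (fun w : {w : Equiv.Perm (Fin n) // IsShort n (P' ∪ Q) w} => N' w))
    (hNspanM' : Submodule.span K (N' '' {w | IsShort n (P' ∪ Q) w}) = ⊤)
    (barM' : M' → M')
    (hbar_actM' : ∀ (m : M') (a : A), barM' (act' m a) = act' (barM' m) (bar a))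
    (hbar_oneM' : barM' (N' 1) = N' 1)
 :
    (∃! z : M' →ₗ[K] M,
      (∀ (m : M') (a : A), z (act' m a) = act (z m) a) ∧ z (N' 1) = N 1) ∧
    (∀ z : M' →ₗ[K] M,
      ((∀ (m : M') (a : A), z (act' m a) = act (z m) a) ∧ z (N' 1) = N 1) →
      (∀ m : M', z (barM' m) = barM (z m)) ∧
      (∀ (C' : Equiv.Perm (Fin n) → M') (C : Equiv.Perm (Fin n) → M),
        IsCanonBasis n (IsShort n (P' ∪ Q)) N' barM' C' →
        IsCanonBasis n (IsShort n (P ∪ Q)) N barM C →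
        ∀ w, IsShort n (P' ∪ Q) w →
          (IsShort n (P ∪ Q) w → z (C' w) = C w) ∧
          (¬ IsShort n (P ∪ Q) w → z (C' w) = 0)) ∧
      (∀ φ : M →ₗ[K] M',
        (∀ w, IsShort n (P ∪ Q) w →
          φ (N w) = ∑ᶠ x ∈ {x : Equiv.Perm (Fin n) |
              x ∈ parab n P ∧ ∀ y ∈ parab n P', len n x ≤ len n (y * x)},
            ((-q) ^ (len n x)) • N' (x * w)) →
        (Function.Injective φ ∧ ∀ (m : M) (a : A), φ (act m a) = act' (φ m) a) ∧
        ∀ m : M, z (φ m) = (∑ᶠ x ∈ {x : Equiv.Perm (Fin n) |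
            x ∈ parab n P ∧ ∀ y ∈ parab n P', len n x ≤ len n (y * x)},
          q ^ (2 * len n x)) • m)) := by
  have hact : IsRightAction act := ⟨hact_addrM, hact_smullM, hact_smulrM, hact_oneM, hact_mulM⟩
  have hact' : IsRightAction act' :=
    ⟨hact_addrM', hact_smullM', hact_smulrM', hact_oneM', hact_mulM'⟩
  have hH : HeckeRelations H := ⟨hone, hmul, hquad⟩
  have hdisj : Disjoint P Q := disjoint_of_smul_neg_q_of_smul_inv_q
    (hNLIM.ne_zero ⟨1, isShort_one _⟩) hgenPM hgenQM
  have hχ := eq_sgnTrvChar_smul subset_rfl hdisj hgenPM hgenQM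
  have hχ' := eq_sgnTrvChar_smul hP'P hdisj hgenPM' hgenQM'
  refine ⟨hact'.existsUnique_map_act hact hH hHspan hNM' hχ' hNLIM' hNspanM'
    fun i hi => hχ i (union_subset_union hP'P subset_rfl hi), fun z ⟨hz_act, hz_one⟩ => ?_⟩
  have hz (v : Equiv.Perm (Fin n)) : z (N' v) = N v := by rw [hNM', hz_act, hz_one, ← hNM]
  have hzbar := hact'.map_bar hNM' hNspanM' hbar_actM' hbar_oneM' hbar_actM hz_act
    (by rw [hz_one, hbar_oneM])
  have hrigid : ∀ m ∈ qLattice N (P ∪ Q), barM m = m → m = 0 := fun m hm hbar =>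
    eq_zero_of_mem_qLattice_of_bar_eq hNLIM hNspanM (hact.exists_N_eq_smul_N hH hNM hχ) hbarKq
      hbar_addM hbar_smulM
      (fun u _ => hact.bar_N_sub_mem_spanBelow hH (fun w => (hbarH w).1) hNM hbar_actM hbar_oneM u)
      hm hbar
  refine ⟨hzbar, fun C' C hC' hC w hw => map_canonBasis hbar_addM hrigid
    (fun w hw => hact.exists_N_eq_neg_q_pow_smul hH hNM hgenPM hPQ
      (IsShort.mono subset_union_right hw)) hz hzbar hC' hC hw, fun φ hφ => ?_⟩
  rw [← coe_shortReps] at hφ ⊢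
  simp only [finsum_mem_coe_finset] at hφ ⊢
  have hzφ := hact.comp_eq_smul_id hH hNM hgenPM hNspanM hz hφ
  refine ⟨⟨Function.Injective.of_comp (f := z) ?_, hact.map_act_of_map_N_eq_sum hact' hH hHspan
    hNM hχ hNspanM hNM' hgenPM' hgenQM' hPQ hdisj hφ⟩, LinearMap.congr_fun hzφ⟩
  rw [← LinearMap.coe_comp, hzφ]
  exact smul_right_injective M (sum_q_pow_two_mul_len_ne_zero P P')

theorem statement5 (n : ℕ) (A : Type) [Ring A] [Algebra K A]
    (H : Equiv.Perm (Fin n) → A)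
    (hHLI : LinearIndependent K H)
    (hHspan : Submodule.span K (Set.range H) = ⊤)
    (hone : H 1 = 1)
    (hmul : ∀ (w : Equiv.Perm (Fin n)) (i : Fin (n - 1)),
      len n (w * s n i) = len n w + 1 → H (w * s n i) = H w * H (s n i))
    (hquad : ∀ i : Fin (n - 1),
      H (s n i) * H (s n i) = (q⁻¹ - q) • H (s n i) + 1)
    (barK : K →+* K) (hbarKq : barK q = q⁻¹)
    (hbarKc : ∀ z : ℂ, barK (algebraMap ℂ K z) = algebraMap ℂ K z)
    (bar : A →+* A)
    (hbar_smul : ∀ (c : K) (x : A), bar (c • x) = barK c • bar x)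
    (hbarH : ∀ w : Equiv.Perm (Fin n),
      bar (H w) * H w⁻¹ = 1 ∧ H w⁻¹ * bar (H w) = 1)
    (P P' Q : Finset (Fin (n - 1)))
    (hPQ : ∀ i ∈ P, ∀ j ∈ Q, s n i * s n j = s n j * s n i)
    (hP'P : P' ⊆ P)
    -- the module M^p_q
    (M : Type) [AddCommGroup M] [Module K M]
    (act : M → A → M)
    (hact_addlM : ∀ (m m' : M) (a : A), act (m + m') a = act m a + act m' a)
    (hact_addrM : ∀ (m : M) (a b : A), act m (a + b) = act m a + act m b)
    (hact_smullM : ∀ (c : K) (m : M) (a : A), act (c • m) a = c • act m a)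
    (hact_smulrM : ∀ (c : K) (m : M) (a : A), act m (c • a) = c • act m a)
    (hact_oneM : ∀ m : M, act m 1 = m)
    (hact_mulM : ∀ (m : M) (a b : A), act m (a * b) = act (act m a) b)
    (N : Equiv.Perm (Fin n) → M)
    (hNM : ∀ w, N w = act (N 1) (H w))
    (hgenPM : ∀ i ∈ P, act (N 1) (H (s n i)) = (-q) • N 1)
    (hgenQM : ∀ i ∈ Q, act (N 1) (H (s n i)) = q⁻¹ • N 1)
    (hNLIM : LinearIndependent K
      (fun w : {w : Equiv.Perm (Fin n) // IsShort n (P ∪ Q) w} => N w))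
    (hNspanM : Submodule.span K (N '' {w | IsShort n (P ∪ Q) w}) = ⊤)
    (barM : M → M)
    (hbar_addM : ∀ m m' : M, barM (m + m') = barM m + barM m')
    (hbar_smulM : ∀ (c : K) (m : M), barM (c • m) = barK c • barM m)
    (hbar_actM : ∀ (m : M) (a : A), barM (act m a) = act (barM m) (bar a))
    (hbar_oneM : barM (N 1) = N 1)
    -- the module M^{p'}_q
    (M' : Type) [AddCommGroup M'] [Module K M']
    (act' : M' → A → M')
    (hact_addlM' : ∀ (m m' : M') (a : A), act' (m + m') a = act' m a + act' m' a)
    (hact_addrM' : ∀ (m : M') (a b : A), act' m (a + b) = act' m a + act' m b)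
    (hact_smullM' : ∀ (c : K) (m : M') (a : A), act' (c • m) a = c • act' m a)
    (hact_smulrM' : ∀ (c : K) (m : M') (a : A), act' m (c • a) = c • act' m a)
    (hact_oneM' : ∀ m : M', act' m 1 = m)
    (hact_mulM' : ∀ (m : M') (a b : A), act' m (a * b) = act' (act' m a) b)
    (N' : Equiv.Perm (Fin n) → M')
    (hNM' : ∀ w, N' w = act' (N' 1) (H w))
    (hgenPM' : ∀ i ∈ P', act' (N' 1) (H (s n i)) = (-q) • N' 1)
    (hgenQM' : ∀ i ∈ Q, act' (N' 1) (H (s n i)) = q⁻¹ • N' 1)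
    (hNLIM' : LinearIndependent K
      (fun w : {w : Equiv.Perm (Fin n) // IsShort n (P' ∪ Q) w} => N' w))
    (hNspanM' : Submodule.span K (N' '' {w | IsShort n (P' ∪ Q) w}) = ⊤)
    (barM' : M' → M')
    (hbar_addM' : ∀ m m' : M', barM' (m + m') = barM' m + barM' m')
    (hbar_smulM' : ∀ (c : K) (m : M'), barM' (c • m) = barK c • barM' m)
    (hbar_actM' : ∀ (m : M') (a : A), barM' (act' m a) = act' (barM' m) (bar a))
    (hbar_oneM' : barM' (N' 1) = N' 1)
 :
    (∃! z : M' →ₗ[K] M,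
      (∀ (m : M') (a : A), z (act' m a) = act (z m) a) ∧ z (N' 1) = N 1) ∧
    (∀ z : M' →ₗ[K] M,
      ((∀ (m : M') (a : A), z (act' m a) = act (z m) a) ∧ z (N' 1) = N 1) →
      (∀ m : M', z (barM' m) = barM (z m)) ∧
      (∀ (C' : Equiv.Perm (Fin n) → M') (C : Equiv.Perm (Fin n) → M),
        IsCanonBasis n (IsShort n (P' ∪ Q)) N' barM' C' →
        IsCanonBasis n (IsShort n (P ∪ Q)) N barM C →
        ∀ w, IsShort n (P' ∪ Q) w →
          (IsShort n (P ∪ Q) w → z (C' w) = C w) ∧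
          (¬ IsShort n (P ∪ Q) w → z (C' w) = 0)) ∧
      (∀ φ : M →ₗ[K] M',
        (∀ w, IsShort n (P ∪ Q) w →
          φ (N w) = ∑ᶠ x ∈ {x : Equiv.Perm (Fin n) |
              x ∈ parab n P ∧ ∀ y ∈ parab n P', len n x ≤ len n (y * x)},
            ((-q) ^ (len n x)) • N' (x * w)) →
        (Function.Injective φ ∧ ∀ (m : M) (a : A), φ (act m a) = act' (φ m) a) ∧
        ∀ m : M, z (φ m) = (∑ᶠ x ∈ {x : Equiv.Perm (Fin n) |
            x ∈ parab n P ∧ ∀ y ∈ parab n P', len n x ≤ len n (y * x)},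
          q ^ (2 * len n x)) • m)) :=
  statement5_general n A H hHspan hone hmul hquad barK hbarKq bar hbarH P P' Q hPQ hP'P M act
    hact_addrM hact_smullM hact_smulrM hact_oneM hact_mulM N hNM hgenPM hgenQM hNLIM hNspanM barM
    hbar_addM hbar_smulM hbar_actM hbar_oneM M' act' hact_addrM' hact_smullM' hact_smulrM'
    hact_oneM' hact_mulM' N' hNM' hgenPM' hgenQM' hNLIM' hNspanM' barM' hbar_actM' hbar_oneM'
end
end

section
/- For all X, Y ∈ M^p_q one has (Ψ(X), Ψ(Y))_{(1,...,1)} = [k]_0!·⟨X, Y⟩, where Ψ : M^p_q → (V^{⊗n})_k is the map N_w ↦ v_{η_min·w} and ⟨·,·⟩ is the bilinear form on M^p_q for which the standard basis {N_w : w ∈ W^{p+q}} is orthonormal. -/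
open scoped Classical

set_option maxHeartbeats 1000000
set_option synthInstance.maxHeartbeats 200000

noncomputable section

/-- The quantum integer `[k] = (q^k - q^{-k})/(q - q^{-1})`. -/
noncomputable def qnum (k : ℕ) : K := (q ^ k - q⁻¹ ^ k) / (q - q⁻¹)

/-- The quantum factorial `[k]! = [k][k-1]⋯[1]`. -/
noncomputable def qfact : ℕ → K
  | 0 => 1
  | k + 1 => qnum (k + 1) * qfact k

/-- The underlying vector space of `V(a_1) ⊗ ⋯ ⊗ V(a_n)`, with standard basis indexed by
sequences `η ∈ {0,1}^n`. -/
abbrev V (n : ℕ) : Type := (Fin n → Fin 2) → K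

/-- The standard basis vector `v_η`. -/
noncomputable def eb {n : ℕ} (η : Fin n → Fin 2) : V n := fun γ => if γ = η then 1 else 0

/-- The number of `1`s in `γ` strictly before position `i` (the Koszul sign exponent). -/
def onesBefore {n : ℕ} (γ : Fin n → Fin 2) (i : Fin n) : ℕ :=
  (Finset.univ.filter (fun k => k < i ∧ γ k = 1)).card

/-- The action of `E` on `V(a_1) ⊗ ⋯ ⊗ V(a_n)` (via the iterated comultiplication
`Δ(E) = E ⊗ K⁻¹ + 1 ⊗ E`, with the Koszul sign rule). -/
noncomputable def Eop (a : ℕ → ℕ) (n : ℕ) : Module.End K (V n) where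
  toFun f := fun γ => ∑ i : Fin n,
    if γ i = 0 then
      ((-1 : K) ^ onesBefore γ i) * qnum (a i)
        * q ^ (-((∑ j ∈ Finset.univ.filter (fun j => i < j), a j : ℕ) : ℤ))
        * f (Function.update γ i 1)
    else 0
  map_add' f g := by
    funext γ
    simp only [Pi.add_apply, ← Finset.sum_add_distrib]
    refine Finset.sum_congr rfl fun i _ => ?_
    split_ifs <;> ring
  map_smul' c f := by
    funext γ
    simp only [Pi.smul_apply, smul_eq_mul, RingHom.id_apply, Finset.mul_sum]
    refine Finset.sum_congr rfl fun i _ => ?_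
    split_ifs <;> ring

/-- The action of `F` on `V(a_1) ⊗ ⋯ ⊗ V(a_n)` (via the iterated comultiplication
`Δ(F) = F ⊗ 1 + K ⊗ F`, with the Koszul sign rule). -/
noncomputable def Fop (a : ℕ → ℕ) (n : ℕ) : Module.End K (V n) where
  toFun f := fun γ => ∑ i : Fin n,
    if γ i = 1 then
      ((-1 : K) ^ onesBefore γ i)
        * q ^ (∑ j ∈ Finset.univ.filter (fun j => j < i), a j)
        * f (Function.update γ i 0)
    else 0
  map_add' f g := by
    funext γ
    simp only [Pi.add_apply, ← Finset.sum_add_distrib]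
    refine Finset.sum_congr rfl fun i _ => ?_
    split_ifs <;> ring
  map_smul' c f := by
    funext γ
    simp only [Pi.smul_apply, smul_eq_mul, RingHom.id_apply, Finset.mul_sum]
    refine Finset.sum_congr rfl fun i _ => ?_
    split_ifs <;> ring

/-- The action of `q^h` for `h = c·h₁ + d·h₂` on `V(a_1) ⊗ ⋯ ⊗ V(a_n)`:
the basis vector `v^{a_i}_0` has weight `a_i ε₁` and `v^{a_i}_1` has weight
`(a_i - 1) ε₁ + ε₂`. -/
noncomputable def Kop (a : ℕ → ℕ) (n : ℕ) (c d : ℤ) : Module.End K (V n) where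
  toFun f := fun γ =>
    q ^ (∑ i : Fin n, (if γ i = 0 then c * (a i : ℤ) else c * ((a i : ℤ) - 1) + d)) * f γ
  map_add' f g := by
    funext γ
    simp only [Pi.add_apply]
    ring
  map_smul' c' f := by
    funext γ
    simp only [Pi.smul_apply, smul_eq_mul, RingHom.id_apply]
    ring

/-- The endomorphism `Ȟ_i` of `V^{⊗n}` (acting on the `i`-th and `(i+1)`-st tensor
factors, 0-based). -/
noncomputable def Hop (n : ℕ) (i : ℕ) (hi : i + 1 < n) : Module.End K (V n) where
  toFun f := fun γ =>
    if γ ⟨i, by omega⟩ = 0 ∧ γ ⟨i + 1, hi⟩ = 0 then q⁻¹ * f γ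
    else if γ ⟨i, by omega⟩ = 1 ∧ γ ⟨i + 1, hi⟩ = 1 then (-q) * f γ
    else if γ ⟨i, by omega⟩ = 0 ∧ γ ⟨i + 1, hi⟩ = 1 then
      f (fun k => γ (Equiv.swap ⟨i, by omega⟩ ⟨i + 1, hi⟩ k))
    else (q⁻¹ - q) * f γ + f (fun k => γ (Equiv.swap ⟨i, by omega⟩ ⟨i + 1, hi⟩ k))
  map_add' f g := by
    funext γ
    simp only [Pi.add_apply]
    split_ifs <;> ring
  map_smul' c f := by
    funext γ
    simp only [Pi.smul_apply, smul_eq_mul, RingHom.id_apply]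
    split_ifs <;> ring

/-- The constant sequence `(1,1,…)`: all tensor factors are the vector representation. -/
def one' : ℕ → ℕ := fun _ => 1

/-- The indices of the simple reflections generating `W_q = ⟨s_1,…,s_{k-1}⟩` (0-based). -/
def Qset (n k : ℕ) : Finset (Fin (n - 1)) :=
  Finset.univ.filter (fun i => (i : ℕ) + 1 < k)

/-- The indices of the simple reflections generating `W_p = ⟨s_{k+1},…,s_{n-1}⟩` (0-based). -/
def Pset (n k : ℕ) : Finset (Fin (n - 1)) :=
  Finset.univ.filter (fun i => k ≤ (i : ℕ))

/-- The minimal `{0,1}`-sequence `η_min = (0,…,0,1,…,1)` with `k` zeros. -/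
def etaMin (n k : ℕ) : Fin n → Fin 2 := fun i => if (i : ℕ) < k then 0 else 1

/-- The weight space `(V^{⊗n})_k`: the span of the standard basis vectors `v_η` with
exactly `k` entries of `η` equal to `0`. -/
noncomputable def weightSpace (n k : ℕ) : Submodule K (V n) :=
  Submodule.span K (eb '' {η : Fin n → Fin 2 | (Finset.univ.filter (fun i => η i = 0)).card = k})

/-- `β^η_j = a_j - η_j`. -/
def betaE (a : ℕ → ℕ) {m : ℕ} (η : Fin m → Fin 2) (i : Fin m) : ℕ := a i - (η i : ℕ)

/-- The diagonal coefficient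
`q^{Σ_{i≠j} β^η_i β^η_j}·[β^η_1+⋯+β^η_m]!/([β^η_1]!⋯[β^η_m]!)` of the bilinear form
(the sum in the exponent is over the unordered pairs `i ≠ j`). -/
noncomputable def formCoeff (a : ℕ → ℕ) (m : ℕ) (η : Fin m → Fin 2) : K :=
  q ^ (∑ p ∈ (Finset.univ ×ˢ Finset.univ).filter (fun p : Fin m × Fin m => p.1 < p.2),
        betaE a η p.1 * betaE a η p.2)
    * qfact (∑ i, betaE a η i) / ∏ i, qfact (betaE a η i)

/-- The symmetric bilinear form `(·,·)_a` on `V(a)`, for which the standard basis is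
orthogonal with `(v^a_η, v^a_η)_a = formCoeff a m η`. -/
noncomputable def Bform (a : ℕ → ℕ) (m : ℕ) (f g : V m) : K :=
  ∑ η : Fin m → Fin 2, formCoeff a m η * f η * g η

/-- The rescaled quantum factorial `[k]₀! = q^{k(k-1)/2}·[k]!`. -/
noncomputable def qfact0 (k : ℕ) : K := q ^ (k * (k - 1) / 2) * qfact k

/-!
The standard basis of `V^{⊗n}` is orthogonal, so it suffices to compare both forms on pairs
`N_w, N_{w'}` of basis vectors. A basis vector `v_η` with `k` zeros has
`(v_η, v_η) = q^{k(k-1)/2}[k]! = [k]₀!`, since all `β^η_j` are `0` or `1`. Distinct shortest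
coset representatives `w` give distinct `η_min·w`: computing lengths as inversion counts, a
shortest representative has no left descent `s_i ∈ W_p × W_q`, so `w⁻¹` is increasing on the
blocks `{0,…,k-1}` and `{k,…,n-1}`; that is, `w⁻¹` is the stable sorting permutation of
`η_min·w`, which determines it.
-/

open Finset Equiv Equiv.Perm

namespace Equiv.Perm

variable {n : ℕ}

def inversions (w : Perm (Fin n)) : Finset (Fin n × Fin n) :=
  {p | p.1 < p.2 ∧ w p.2 < w p.1}

@[simp]
lemma mem_inversions {w : Perm (Fin n)} {p : Fin n × Fin n} :
    p ∈ inversions w ↔ p.1 < p.2 ∧ w p.2 < w p.1 := by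
  simp [inversions]

lemma inversions_one : inversions (1 : Perm (Fin n)) = ∅ := by
  ext p
  simpa using fun h : p.1 < p.2 => h.le

lemma swap_apply_lt_swap_apply_iff {a b c d : Fin n} (hab : (a : ℕ) + 1 = b)
    (hcd : ¬(c = a ∧ d = b)) (hdc : ¬(c = b ∧ d = a)) :
    swap a b d < swap a b c ↔ d < c := by
  simp only [swap_apply_def, Fin.ext_iff, Fin.lt_def] at *
  split_ifs <;> omega

lemma inversions_swap_mul {w : Perm (Fin n)} {a b : Fin n} (hab : (a : ℕ) + 1 = b)
    (h : w⁻¹ a < w⁻¹ b) :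
    inversions (swap a b * w) = insert (w⁻¹ a, w⁻¹ b) (inversions w) := by
  ext ⟨i, j⟩
  simp only [mem_inversions, mem_insert, Prod.mk.injEq, Perm.mul_apply]
  by_cases hab' : i = w⁻¹ a ∧ j = w⁻¹ b
  · obtain ⟨rfl, rfl⟩ := hab'
    simp only [Perm.coe_inv, apply_symm_apply, swap_apply_left, swap_apply_right, and_self,
      true_or, iff_true]
    exact ⟨h, Fin.lt_def.2 (by omega)⟩
  by_cases hba : i = w⁻¹ b ∧ j = w⁻¹ a
  · obtain ⟨rfl, rfl⟩ := hba
    grind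
  simp only [Perm.eq_inv_iff_eq] at hab' hba ⊢
  rw [swap_apply_lt_swap_apply_iff hab hab' hba, or_iff_right hab']

lemma card_inversions_swap_mul_of_lt {w : Perm (Fin n)} {a b : Fin n} (hab : (a : ℕ) + 1 = b)
    (h : w⁻¹ a < w⁻¹ b) : #(inversions (swap a b * w)) = #(inversions w) + 1 := by
  rw [inversions_swap_mul hab h, card_insert_of_notMem]
  simpa using fun _ => (Fin.lt_def.2 (by omega) : a < b).le

lemma card_inversions_swap_mul_of_gt {w : Perm (Fin n)} {a b : Fin n} (hab : (a : ℕ) + 1 = b)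
    (h : w⁻¹ b < w⁻¹ a) : #(inversions (swap a b * w)) + 1 = #(inversions w) := by
  have := card_inversions_swap_mul_of_lt (w := swap a b * w) hab (by simpa using h)
  rwa [swap_mul_self_mul, eq_comm] at this

end Equiv.Perm

lemma Fin.apply_lt_apply_of_adjacent {α : Type*} [Preorder α] {n : ℕ} {f : Fin n → α}
    {i j : Fin n} (hij : i < j)
    (h : ∀ a b : Fin n, (a : ℕ) + 1 = b → i ≤ a → b ≤ j → f a < f b) : f i < f j := by
  obtain ⟨j, hj⟩ := j
  induction j with
  | zero => exact absurd (Fin.lt_def.1 hij) (Nat.not_lt_zero _)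
  | succ m ih =>
    have hm : m < n := by omega
    have hstep := h ⟨m, hm⟩ ⟨m + 1, hj⟩ rfl
    rcases Nat.lt_or_eq_of_le (Nat.le_of_lt_succ (Fin.lt_def.1 hij)) with him | him
    · refine (ih hm (Fin.lt_def.2 him) fun a b hab hia hbj => h a b hab hia ?_).trans
        (hstep (Fin.le_def.2 him.le) le_rfl)
      exact hbj.trans (Fin.le_def.2 (Nat.le_succ m))
    · obtain rfl : i = ⟨m, hm⟩ := Fin.ext him
      exact hstep le_rfl le_rfl

lemma s_eq_swap {n : ℕ} {i : Fin (n - 1)} {a b : Fin n} (ha : (a : ℕ) = i)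
    (hb : (b : ℕ) = i + 1) : s n i = swap a b := by
  rw [s]
  congr 1 <;> exact Fin.ext (by simp [ha, hb])

lemma wordProd_cons {n : ℕ} (i : Fin (n - 1)) (l : List (Fin (n - 1))) :
    wordProd n (i :: l) = s n i * wordProd n l := by
  simp [wordProd]

lemma card_inversions_s_mul_le {n : ℕ} (i : Fin (n - 1)) (w : Perm (Fin n)) :
    #(inversions (s n i * w)) ≤ #(inversions w) + 1 := by
  have hi := i.isLt
  rw [s_eq_swap (a := ⟨i, by omega⟩) (b := ⟨i + 1, by omega⟩) rfl rfl]
  rcases lt_or_gt_of_ne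
    (w⁻¹.injective.ne (a₁ := ⟨i, by omega⟩) (a₂ := ⟨i + 1, by omega⟩) (by simp)) with h | h
  · rw [card_inversions_swap_mul_of_lt rfl h]
  · have := card_inversions_swap_mul_of_gt rfl h
    omega

lemma card_inversions_wordProd_le {n : ℕ} (l : List (Fin (n - 1))) :
    #(inversions (wordProd n l)) ≤ l.length := by
  induction l with
  | nil => simp [wordProd, inversions_one]
  | cons i l ih =>
    rw [wordProd_cons, List.length_cons]
    exact (card_inversions_s_mul_le i _).trans (by omega)

lemma exists_wordProd_eq {n : ℕ} (w : Perm (Fin n)) :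
    ∃ l : List (Fin (n - 1)), l.length = #(inversions w) ∧ wordProd n l = w := by
  induction hm : #(inversions w) using Nat.strong_induction_on generalizing w with
  | _ m ih =>
  by_cases hdesc : ∃ a b : Fin n, (a : ℕ) + 1 = b ∧ w⁻¹ b < w⁻¹ a
  · obtain ⟨a, b, hab, hba⟩ := hdesc
    have hcard := card_inversions_swap_mul_of_gt hab hba
    obtain ⟨l, hl, hprod⟩ := ih _ (by omega) (swap a b * w) rfl
    refine ⟨⟨a, by omega⟩ :: l, by simp only [List.length_cons]; omega, ?_⟩
    rw [wordProd_cons, s_eq_swap rfl hab.symm, hprod, swap_mul_self_mul]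
  · push Not at hdesc
    have hmono : StrictMono (⇑w⁻¹) := fun i j hij =>
      Fin.apply_lt_apply_of_adjacent hij fun a b hab _ _ =>
        (hdesc a b hab).lt_of_ne (w⁻¹.injective.ne (Fin.ne_of_val_ne (by omega)))
    obtain rfl : w = 1 := inv_eq_one.1 (Equiv.ext fun _ => hmono.apply_eq)
    exact ⟨[], by simp [← hm, inversions_one], rfl⟩

theorem len_eq_card_inversions {n : ℕ} (w : Perm (Fin n)) : len n w = #(inversions w) := by
  obtain ⟨l, hl, hw⟩ := exists_wordProd_eq w
  refine le_antisymm (Nat.sInf_le ⟨l, hl, hw⟩) ?_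
  obtain ⟨l', hl', rfl⟩ := Nat.sInf_mem (⟨_, l, hl, hw⟩ :
    {k | ∃ l : List (Fin (n - 1)), l.length = k ∧ wordProd n l = w}.Nonempty)
  exact (card_inversions_wordProd_le l').trans hl'.le

lemma IsShort.inv_lt_inv {n : ℕ} {P : Finset (Fin (n - 1))} {w : Perm (Fin n)}
    (hw : IsShort n P w) {i : Fin (n - 1)} (hi : i ∈ P) {a b : Fin n} (ha : (a : ℕ) = i)
    (hb : (b : ℕ) = i + 1) : w⁻¹ a < w⁻¹ b := by
  have hmem : s n i ∈ parab n P := Subgroup.subset_closure ⟨i, hi, rfl⟩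
  have hlen := hw _ hmem
  rw [len_eq_card_inversions, len_eq_card_inversions, s_eq_swap ha hb] at hlen
  refine (lt_or_gt_of_ne (w⁻¹.injective.ne (Fin.ne_of_val_ne (by omega)))).resolve_right
    fun h => ?_
  have := card_inversions_swap_mul_of_gt (by omega) h
  omega

lemma etaMin_monotone (n k : ℕ) : Monotone (etaMin n k) := by
  intro i j hij
  simp only [etaMin]
  rw [Fin.le_def] at hij
  split_ifs <;> omega

theorem IsShort.inv_eq_sort {n k : ℕ} {w : Perm (Fin n)}
    (hw : IsShort n (Pset n k ∪ Qset n k) w) : w⁻¹ = Tuple.sort (etaMin n k ∘ w) := by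
  rw [Tuple.eq_sort_iff]
  refine ⟨by simpa [Function.comp_def] using etaMin_monotone n k, fun i j hij heq => ?_⟩
  simp only [Function.comp_apply, Perm.coe_inv, apply_symm_apply, etaMin] at heq
  refine Fin.apply_lt_apply_of_adjacent hij fun a b hab hia hbj => ?_
  refine hw.inv_lt_inv (i := ⟨a, by omega⟩) ?_ rfl hab.symm
  simp only [mem_union, Pset, Qset, mem_filter, mem_univ, true_and]
  rw [Fin.le_def] at hia hbj
  split_ifs at heq <;> omega

theorem IsShort.eq_of_etaMin_comp_eq {n k : ℕ} {w w' : Perm (Fin n)}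
    (hw : IsShort n (Pset n k ∪ Qset n k) w) (hw' : IsShort n (Pset n k ∪ Qset n k) w')
    (h : etaMin n k ∘ w = etaMin n k ∘ w') : w = w' :=
  inv_injective (by rw [hw.inv_eq_sort, hw'.inv_eq_sort, h])

lemma q_sub_q_inv_ne_zero : q - q⁻¹ ≠ 0 := by
  intro h
  have := congrArg RatFunc.intDegree (sub_eq_zero.1 h)
  rw [RatFunc.intDegree_inv, q, RatFunc.intDegree_X] at this
  omega

lemma qfact_one : qfact 1 = 1 := by
  simp [qfact, qnum, div_self q_sub_q_inv_ne_zero]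

lemma betaE_one' {m : ℕ} (η : Fin m → Fin 2) (i : Fin m) :
    betaE one' η i = if η i = 0 then 1 else 0 := by
  simp only [betaE, one']
  split_ifs <;> omega

lemma formCoeff_one' (m : ℕ) (η : Fin m → Fin 2) :
    formCoeff one' m η = qfact0 #{i | η i = 0} := by
  set Z : Finset (Fin m) := {i | η i = 0}
  have hsum : ∑ i, betaE one' η i = #Z := by simp [Z, betaE_one', sum_boole]
  have hexp : ∑ p ∈ (univ ×ˢ univ).filter (fun p : Fin m × Fin m => p.1 < p.2),
      betaE one' η p.1 * betaE one' η p.2 = #Z * (#Z - 1) / 2 := by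
    rw [← Nat.choose_two_right, ← card_product_filter_lt]
    simp only [betaE_one', mul_ite, mul_one, mul_zero, sum_ite, sum_const_zero, add_zero,
      sum_const, smul_eq_mul, filter_filter]
    congr 1
    ext p
    grind
  have hprod : ∏ i, qfact (betaE one' η i) = 1 :=
    prod_eq_one fun i _ => by rw [betaE_one']; split_ifs; exacts [qfact_one, rfl]
  rw [formCoeff, hexp, hsum, hprod, div_one, qfact0]

lemma card_etaMin_comp_eq_zero {n k : ℕ} (hk : k ≤ n) (w : Perm (Fin n)) :
    #{i | etaMin n k (w i) = 0} = k := by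
  rw [card_equiv w (t := {j : Fin n | (j : ℕ) < k}) (by simp [etaMin]), Fin.card_filter_val_lt,
    min_eq_right hk]

lemma LinearMap.ext_on₂ {R M N : Type*} [CommSemiring R] [AddCommMonoid M] [Module R M]
    [AddCommMonoid N] [Module R N] {S : Set M} (hS : Submodule.span R S = ⊤)
    {B B' : M →ₗ[R] M →ₗ[R] N} (h : ∀ x ∈ S, ∀ y ∈ S, B x y = B' x y) : B = B' :=
  LinearMap.ext_on hS fun x hx => LinearMap.ext_on hS fun y hy => h x hx y hy

def Bform.toLinearMap₂ (a : ℕ → ℕ) (m : ℕ) : V m →ₗ[K] V m →ₗ[K] K :=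
  LinearMap.mk₂ K (Bform a m)
    (fun f f' g => by simp only [Bform, Pi.add_apply, mul_add, add_mul, sum_add_distrib])
    (fun c f g => by
      simp only [Bform, Pi.smul_apply, smul_eq_mul, mul_sum]
      exact sum_congr rfl fun _ _ => by ring)
    (fun f g g' => by simp only [Bform, Pi.add_apply, mul_add, sum_add_distrib])
    (fun c f g => by
      simp only [Bform, Pi.smul_apply, smul_eq_mul, mul_sum]
      exact sum_congr rfl fun _ _ => by ring)

@[simp]
lemma Bform.toLinearMap₂_apply (a : ℕ → ℕ) (m : ℕ) (f g : V m) :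
    Bform.toLinearMap₂ a m f g = Bform a m f g := rfl

lemma Bform_eb (a : ℕ → ℕ) {m : ℕ} (η γ : Fin m → Fin 2) :
    Bform a m (eb η) (eb γ) = if η = γ then formCoeff a m η else 0 := by
  by_cases h : η = γ <;> simp [Bform, eb, h, Ne.symm]

theorem statement11_general (n k : ℕ) (hk : k ≤ n)
    (M : Type) [AddCommGroup M] [Module K M]
    (N : Equiv.Perm (Fin n) → M)
    (hNspan : Submodule.span K (N '' {w | IsShort n (Pset n k ∪ Qset n k) w}) = ⊤)
    -- the bilinear form on M^p_q for which the standard basis is orthonormal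
    (Bm : M → M → K)
    (hBm_addl : ∀ (X X' Y : M), Bm (X + X') Y = Bm X Y + Bm X' Y)
    (hBm_addr : ∀ (X Y Y' : M), Bm X (Y + Y') = Bm X Y + Bm X Y')
    (hBm_smull : ∀ (c : K) (X Y : M), Bm (c • X) Y = c * Bm X Y)
    (hBm_smulr : ∀ (c : K) (X Y : M), Bm X (c • Y) = c * Bm X Y)
    (hBm_orth : ∀ w w' : Equiv.Perm (Fin n),
      IsShort n (Pset n k ∪ Qset n k) w → IsShort n (Pset n k ∪ Qset n k) w' →
      Bm (N w) (N w') = if w = w' then 1 else 0)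
    -- the map Ψ : M^p_q → (V^{⊗n})_k, N_w ↦ v_{η_min·w}
    (Ψ : M →ₗ[K] V n)
    (hΨ : ∀ w : Equiv.Perm (Fin n), IsShort n (Pset n k ∪ Qset n k) w →
      Ψ (N w) = eb (fun i => etaMin n k (w i))) :
    ∀ X Y : M, Bform one' n (Ψ X) (Ψ Y) = qfact0 k * Bm X Y := by
  have key : (Bform.toLinearMap₂ one' n).compl₁₂ Ψ Ψ
      = qfact0 k • LinearMap.mk₂ K Bm hBm_addl hBm_smull hBm_addr hBm_smulr := by
    refine LinearMap.ext_on₂ hNspan ?_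
    rintro _ ⟨w, hw, rfl⟩ _ ⟨w', hw', rfl⟩
    simp only [LinearMap.compl₁₂_apply, Bform.toLinearMap₂_apply, LinearMap.smul_apply,
      LinearMap.mk₂_apply, hΨ w hw, hΨ w' hw', Bform_eb, hBm_orth w w' hw hw']
    by_cases h : w = w'
    · subst h
      simp [formCoeff_one', card_etaMin_comp_eq_zero hk]
    · rw [if_neg h, smul_zero]
      exact if_neg fun he => h (hw.eq_of_etaMin_comp_eq hw' he)
  exact LinearMap.congr_fun₂ key

theorem statement11 (n k : ℕ) (hk : k ≤ n)
    (A : Type) [Ring A] [Algebra K A]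
    (H : Equiv.Perm (Fin n) → A)
    (hHLI : LinearIndependent K H)
    (hHspan : Submodule.span K (Set.range H) = ⊤)
    (hone : H 1 = 1)
    (hmul : ∀ (w : Equiv.Perm (Fin n)) (i : Fin (n - 1)),
      len n (w * s n i) = len n w + 1 → H (w * s n i) = H w * H (s n i))
    (hquad : ∀ i : Fin (n - 1),
      H (s n i) * H (s n i) = (q⁻¹ - q) • H (s n i) + 1)
    (M : Type) [AddCommGroup M] [Module K M]
    (act : M → A → M)
    (hact_addl : ∀ (m m' : M) (a : A), act (m + m') a = act m a + act m' a)
    (hact_addr : ∀ (m : M) (a b : A), act m (a + b) = act m a + act m b)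
    (hact_smull : ∀ (c : K) (m : M) (a : A), act (c • m) a = c • act m a)
    (hact_smulr : ∀ (c : K) (m : M) (a : A), act m (c • a) = c • act m a)
    (hact_one : ∀ m : M, act m 1 = m)
    (hact_mul : ∀ (m : M) (a b : A), act m (a * b) = act (act m a) b)
    (N : Equiv.Perm (Fin n) → M)
    (hN : ∀ w, N w = act (N 1) (H w))
    (hgenP : ∀ i ∈ Pset n k, act (N 1) (H (s n i)) = (-q) • N 1)
    (hgenQ : ∀ i ∈ Qset n k, act (N 1) (H (s n i)) = q⁻¹ • N 1)
    (hNLI : LinearIndependent K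
      (fun w : {w : Equiv.Perm (Fin n) // IsShort n (Pset n k ∪ Qset n k) w} => N w))
    (hNspan : Submodule.span K (N '' {w | IsShort n (Pset n k ∪ Qset n k) w}) = ⊤)
    -- the bilinear form on M^p_q for which the standard basis is orthonormal
    (Bm : M → M → K)
    (hBm_addl : ∀ (X X' Y : M), Bm (X + X') Y = Bm X Y + Bm X' Y)
    (hBm_addr : ∀ (X Y Y' : M), Bm X (Y + Y') = Bm X Y + Bm X Y')
    (hBm_smull : ∀ (c : K) (X Y : M), Bm (c • X) Y = c * Bm X Y)
    (hBm_smulr : ∀ (c : K) (X Y : M), Bm X (c • Y) = c * Bm X Y)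
    (hBm_orth : ∀ w w' : Equiv.Perm (Fin n),
      IsShort n (Pset n k ∪ Qset n k) w → IsShort n (Pset n k ∪ Qset n k) w' →
      Bm (N w) (N w') = if w = w' then 1 else 0)
    -- the map Ψ : M^p_q → (V^{⊗n})_k, N_w ↦ v_{η_min·w}
    (Ψ : M →ₗ[K] V n)
    (hΨ : ∀ w : Equiv.Perm (Fin n), IsShort n (Pset n k ∪ Qset n k) w →
      Ψ (N w) = eb (fun i => etaMin n k (w i))) :
    ∀ X Y : M, Bform one' n (Ψ X) (Ψ Y) = qfact0 k * Bm X Y :=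
  statement11_general n k hk M N hNspan Bm hBm_addl hBm_addr hBm_smull hBm_smulr hBm_orth Ψ hΨ
end
end

section
/- Let a = (a_1,...,a_l) be a composition of n and 0 ≤ k ≤ n. The map w ↦ T_a(w) = w·T_a^min is a bijection from (S_n/S_a)^short to the set of (n-k,k)-tableaux of type a, and it restricts to a bijection from Λ_k(a) to the set of admissible (n-k,k)-tableaux of type a. -/
/-!
STATEMENT 19: Let `a = (a_1,…,a_l)` be a composition of `n` and `0 ≤ k ≤ n`.  The map
`w ↦ T_a(w) = w·T_a^min` is a bijection from `(S_n/S_a)^short` to the set of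
`(n-k,k)`-tableaux of type `a`, and it restricts to a bijection from `Λ_k(a)` to the set
of admissible `(n-k,k)`-tableaux of type `a`.

A hook tableau of shape `(n-k,k)` is modelled as a function `T : Fin n → Fin l` on the
`n` boxes, numbered `0,…,k-1` along the column from bottom to top and then `k,…,n-1`
along the row from left to right (the corner box, number `k`, belongs to the row).
`S_n` acts on tableaux by permuting boxes, `(w·T)(b) = T(w⁻¹ b)`; the minimal tableau
`T_a^min` places the entries `1^{a_1} 2^{a_2} ⋯ l^{a_l}` in weakly increasing order along
the boxes, and the Young subgroup `S_a` is its stabilizer, generated by the simple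
transpositions of adjacent boxes with equal entries of `T_a^min`.
-/

open scoped Classical

noncomputable section

/-- `w` is a shortest representative of its coset `w·S_L` in `S_n / S_L`. -/
def IsShortR (n : ℕ) (L : Finset (Fin (n - 1))) (w : Equiv.Perm (Fin n)) : Prop :=
  ∀ x ∈ parab n L, len n w ≤ len n (w * x)

/-- The set `Λ^p_q(λ) = { w ∈ (S_n/S_λ)^short : w S_λ ⊆ W^p and w S_λ ∩ w_q W^q ≠ ∅ }`,
where `w_q` is the longest element of `W_q`. -/
def LambdaSet (n : ℕ) (P Q L : Finset (Fin (n - 1))) (wq : Equiv.Perm (Fin n)) :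
    Set (Equiv.Perm (Fin n)) :=
  {w | IsShortR n L w ∧
    (∀ x ∈ parab n L, IsShort n P (w * x)) ∧
    (∃ x ∈ parab n L, ∃ u : Equiv.Perm (Fin n), IsShort n Q u ∧ w * x = wq * u)}

/-- `T` is an `(n-k,k)`-tableau of type `a`: each entry `v` occurs exactly `a v` times. -/
def IsType {n l : ℕ} (a : Fin l → ℕ) (T : Fin n → Fin l) : Prop :=
  ∀ v : Fin l, (Finset.univ.filter (fun b => T b = v)).card = a v

/-- `T` is admissible: the entries of the column (boxes `0,…,k-1`, from bottom to top)
are non-increasing and the entries of the row (boxes `k,…,n-1`, from left to right) are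
strictly increasing. -/
def Admissible {n l : ℕ} (k : ℕ) (T : Fin n → Fin l) : Prop :=
  (∀ i j : Fin n, (i : ℕ) < (j : ℕ) → (j : ℕ) < k → T j ≤ T i) ∧
  (∀ i j : Fin n, k ≤ (i : ℕ) → (i : ℕ) < (j : ℕ) → T i < T j)


/-!
In `S_n` the length of a permutation is its number of inversions. If `f` is weakly increasing and
`P` is the set of adjacent positions on which `f` is constant, the parabolic subgroup `W_P` is
the stabilizer of `f`, and `w` is the shortest element of `w W_P` exactly when `w` increases on
every fibre of `f`. Such a `w` is the permutation sorting `f ∘ w⁻¹`, which gives the first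
bijection. The subgroups `W_p` and `W_q` arise in this way from the row and the column, so `W^p`
and `W^q` consist of the `u` with `u⁻¹` increasing on the row, resp. on the column. Requiring
this of every element of `w S_a` says that the row of `T_a(w)` strictly increases: two boxes with
equal entries can be swapped inside `w S_a`. Since the longest element `w_q` reverses the column,
`w S_a` meets `w_q W^q` exactly when the column of `T_a(w)` weakly decreases.
-/

namespace HookTableau

open Finset

variable {n : ℕ}

def lo (i : Fin (n - 1)) : Fin n := ⟨i, by have := i.isLt; omega⟩

def hi (i : Fin (n - 1)) : Fin n := ⟨i + 1, by have := i.isLt; omega⟩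

lemma s_eq_swap (i : Fin (n - 1)) : s n i = Equiv.swap (lo i) (hi i) := rfl

@[simp] lemma val_lo (i : Fin (n - 1)) : (lo i : ℕ) = i := rfl

@[simp] lemma val_hi (i : Fin (n - 1)) : (hi i : ℕ) = i + 1 := rfl

lemma lo_lt_hi (i : Fin (n - 1)) : lo i < hi i := Fin.lt_def.2 (by simp)

lemma exists_lo_hi_of_not_isMax {a : Fin n} (ha : ¬IsMax a) :
    ∃ i : Fin (n - 1), lo i = a ∧ hi i = Order.succ a := by
  have han : (a : ℕ) + 1 < n := by
    by_contra! h
    exact ha fun b _ => Fin.le_def.2 (by omega)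
  refine ⟨⟨a, by omega⟩, rfl,
    (Order.succ_eq_of_covBy ⟨Fin.lt_def.2 ?_, fun c h1 h2 => ?_⟩).symm⟩
  · simp
  · rw [Fin.lt_def] at h1 h2
    change (c : ℕ) < a + 1 at h2
    omega

lemma strictMonoOn_of_adjacent {β : Type*} [Preorder β] {S : Set (Fin n)} (hS : S.OrdConnected)
    {g : Fin n → β} (h : ∀ i, lo i ∈ S → hi i ∈ S → g (lo i) < g (hi i)) :
    StrictMonoOn g S := by
  refine strictMonoOn_of_lt_succ hS fun a ha haS hsS => ?_
  obtain ⟨i, rfl, hsucc⟩ := exists_lo_hi_of_not_isMax ha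
  rw [← hsucc] at hsS ⊢
  exact h i haS hsS

lemma exists_descent {g : Equiv.Perm (Fin n)} (hg : g ≠ 1) : ∃ i, g (hi i) < g (lo i) := by
  by_contra! h
  have hmono : StrictMono g := by
    simpa using strictMonoOn_of_adjacent Set.ordConnected_univ fun i _ _ =>
      (h i).lt_of_ne (g.injective.ne (lo_lt_hi i).ne)
  refine hg (Equiv.ext fun b => ?_)
  simpa using congrFun (Tuple.unique_monotone (f := id) (σ := g) (τ := 1) hmono.monotone
    monotone_id) b

def inversions (g : Equiv.Perm (Fin n)) : Finset (Fin n × Fin n) :=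
  {p | p.1 < p.2 ∧ g p.2 < g p.1}

def invCount (g : Equiv.Perm (Fin n)) : ℕ := #(inversions g)

@[simp] lemma mem_inversions {g : Equiv.Perm (Fin n)} {p : Fin n × Fin n} :
    p ∈ inversions g ↔ p.1 < p.2 ∧ g p.2 < g p.1 := by
  simp [inversions]

@[simp] lemma invCount_one : invCount (1 : Equiv.Perm (Fin n)) = 0 := by
  simp only [invCount, card_eq_zero, eq_empty_iff_forall_notMem, mem_inversions,
    Equiv.Perm.one_apply]
  exact fun p h => lt_asymm h.1 h.2

lemma invCount_inv (g : Equiv.Perm (Fin n)) : invCount g⁻¹ = invCount g := by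
  refine card_nbij' (fun p => (g⁻¹ p.2, g⁻¹ p.1)) (fun q => (g q.2, g q.1)) ?_ ?_ ?_ ?_ <;>
    intro p <;> simp +contextual

lemma s_apply_lt_s_apply {i : Fin (n - 1)} {x y : Fin n} (hxy : x < y)
    (hne : (x, y) ≠ (lo i, hi i)) :
    s n i x < s n i y := by
  simp only [s_eq_swap, Equiv.swap_apply_def]
  simp only [ne_eq, Prod.mk.injEq, Fin.ext_iff, Fin.lt_def, val_lo, val_hi] at hne hxy ⊢
  split_ifs <;> simp_all <;> omega

lemma inversions_mul_s {g : Equiv.Perm (Fin n)} {i : Fin (n - 1)} (h : g (lo i) < g (hi i)) :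
    inversions (g * s n i) = insert (lo i, hi i)
      ((inversions g).map (Equiv.prodCongr (s n i) (s n i)).toEmbedding) := by
  ext ⟨x, y⟩
  have hsymm : (s n i).symm = s n i := Equiv.symm_swap _ _
  simp only [mem_insert, mem_map_equiv, Equiv.prodCongr_symm, hsymm, Equiv.prodCongr_apply,
    Prod.map, mem_inversions, Equiv.Perm.mul_apply]
  by_cases hxy : (x, y) = (lo i, hi i)
  · simp only [Prod.mk.injEq] at hxy
    simp [hxy.1, hxy.2, lo_lt_hi, s_eq_swap, h]
  refine ⟨fun ⟨hlt, hg⟩ => Or.inr ⟨s_apply_lt_s_apply hlt hxy, hg⟩, ?_⟩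
  rintro (hxy' | ⟨hlt, hg⟩)
  · exact absurd hxy' hxy
  refine ⟨?_, hg⟩
  have hne : (s n i x, s n i y) ≠ (lo i, hi i) := by
    intro he
    simp only [Prod.mk.injEq] at he
    rw [he.1, he.2] at hg
    exact lt_asymm h hg
  simpa only [s_eq_swap, Equiv.swap_apply_self] using s_apply_lt_s_apply hlt hne

lemma invCount_mul_s_of_lt {g : Equiv.Perm (Fin n)} {i : Fin (n - 1)}
    (h : g (lo i) < g (hi i)) : invCount (g * s n i) = invCount g + 1 := by
  rw [invCount, inversions_mul_s h, card_insert_of_notMem, card_map, invCount]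
  simp [mem_map_equiv, Equiv.symm_swap, s_eq_swap, (lo_lt_hi i).not_gt]

lemma invCount_mul_s_of_gt {g : Equiv.Perm (Fin n)} {i : Fin (n - 1)}
    (h : g (hi i) < g (lo i)) : invCount (g * s n i) + 1 = invCount g := by
  have h' : (g * s n i) (lo i) < (g * s n i) (hi i) := by
    simpa [s_eq_swap] using h
  rw [← invCount_mul_s_of_lt h', mul_assoc, s_eq_swap, Equiv.swap_mul_self, mul_one]

lemma invCount_mul_s_le (g : Equiv.Perm (Fin n)) (i : Fin (n - 1)) :
    invCount (g * s n i) ≤ invCount g + 1 := by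
  rcases lt_or_gt_of_ne (g.injective.ne (lo_lt_hi i).ne) with h | h
  · exact (invCount_mul_s_of_lt h).le
  · have := invCount_mul_s_of_gt h
    omega

lemma wordProd_append_singleton (l : List (Fin (n - 1))) (i : Fin (n - 1)) :
    wordProd n (l ++ [i]) = wordProd n l * s n i := by
  simp [wordProd]

lemma invCount_wordProd_le (l : List (Fin (n - 1))) : invCount (wordProd n l) ≤ l.length := by
  induction l using List.reverseRecOn with
  | nil => simp [wordProd]
  | append_singleton l i ih =>
    rw [wordProd_append_singleton, List.length_append, List.length_singleton]
    exact (invCount_mul_s_le _ i).trans (by omega)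

lemma apply_swap_apply_of_eq {α β : Type*} [DecidableEq α] {f : α → β} {c d : α}
    (h : f c = f d) (b : α) : f (Equiv.swap c d b) = f b := by
  rw [Equiv.swap_apply_def]
  split_ifs with h1 h2
  · rw [h1, h]
  · rw [h2, h]
  · rfl

lemma exists_reduced_word {α : Type*} [PartialOrder α] {f : Fin n → α} (hf : Monotone f)
    {x : Equiv.Perm (Fin n)} (hx : ∀ b, f (x b) = f b) :
    ∃ l : List (Fin (n - 1)), l.length = invCount x ∧ wordProd n l = x ∧
      ∀ i ∈ l, f (lo i) = f (hi i) := by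
  induction hm : invCount x using Nat.strong_induction_on generalizing x with
  | _ m ih =>
  by_cases hx1 : x = 1
  · subst hx1
    exact ⟨[], by simp [← hm], rfl, by simp⟩
  obtain ⟨i, hdesc⟩ := exists_descent hx1
  have hfi : f (lo i) = f (hi i) :=
    (hf (lo_lt_hi i).le).antisymm (by simpa only [hx] using hf hdesc.le)
  have hxs : ∀ b, f ((x * s n i) b) = f b := fun b => by
    rw [Equiv.Perm.mul_apply, hx, s_eq_swap, apply_swap_apply_of_eq hfi]
  have hlt := invCount_mul_s_of_gt hdesc
  obtain ⟨l, hl, hprod, hlf⟩ := ih _ (by omega) hxs rfl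
  refine ⟨l ++ [i], by simp [hl]; omega, ?_,
    fun j hj => (List.mem_append.1 hj).elim (hlf j) (by simp_all)⟩
  rw [wordProd_append_singleton, hprod, mul_assoc, s_eq_swap, Equiv.swap_mul_self, mul_one]

lemma len_eq_invCount (g : Equiv.Perm (Fin n)) : len n g = invCount g := by
  -- a constant `f` puts no constraint on the letters
  obtain ⟨l, hl, hg, -⟩ := exists_reduced_word (f := fun _ => (0 : ℕ)) monotone_const
    (x := g) fun _ => rfl
  refine le_antisymm (Nat.sInf_le ⟨l, hl, hg⟩) (le_csInf ⟨_, l, hl, hg⟩ ?_)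
  rintro m ⟨l', rfl, rfl⟩
  exact invCount_wordProd_le l'

lemma len_inv (g : Equiv.Perm (Fin n)) : len n g⁻¹ = len n g := by
  rw [len_eq_invCount, len_eq_invCount, invCount_inv]

lemma isShort_iff_isShortR_inv (P : Finset (Fin (n - 1))) (u : Equiv.Perm (Fin n)) :
    IsShort n P u ↔ IsShortR n P u⁻¹ := by
  refine ⟨fun h x hx => ?_, fun h x hx => ?_⟩
  · simpa [← len_inv (x⁻¹ * u), len_inv] using h x⁻¹ (inv_mem hx)
  · simpa [← len_inv (x * u), len_inv] using h x⁻¹ (inv_mem hx)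

lemma lt_of_isShortR {P : Finset (Fin (n - 1))} {w : Equiv.Perm (Fin n)}
    (hw : IsShortR n P w) {i : Fin (n - 1)} (hiP : i ∈ P) : w (lo i) < w (hi i) := by
  refine (lt_or_gt_of_ne (w.injective.ne (lo_lt_hi i).ne)).resolve_right fun h => ?_
  have := hw _ (Subgroup.subset_closure ⟨i, hiP, rfl⟩)
  rw [len_eq_invCount, len_eq_invCount, ← invCount_mul_s_of_gt h] at this
  omega

section Rearrangement

variable {α : Type*}

lemma map_univ_comp_perm (f : Fin n → α) (σ : Equiv.Perm (Fin n)) :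
    univ.val.map (f ∘ σ) = univ.val.map f := by
  rw [← Multiset.map_map, Multiset.map_univ_val_equiv]

lemma eq_of_monotone_of_map_univ_eq [PartialOrder α] {f g : Fin n → α} (hf : Monotone f)
    (hg : Monotone g) (h : univ.val.map f = univ.val.map g) : f = g :=
  List.ofFn_injective <| (by simpa using h : List.Perm (List.ofFn f) (List.ofFn g)).eq_of_pairwise'
    hf.sortedLE_ofFn.pairwise hg.sortedLE_ofFn.pairwise

variable [LinearOrder α]

lemma comp_sort_eq_of_map_univ_eq {f T : Fin n → α} (hf : Monotone f)
    (hT : univ.val.map T = univ.val.map f) : T ∘ Tuple.sort T = f :=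
  eq_of_monotone_of_map_univ_eq (Tuple.monotone_sort T) hf
    ((map_univ_comp_perm T _).trans hT)

lemma sort_inv_lt_sort_inv {f : Fin n → α} {i j : Fin n} (hij : i < j) (hf : f i ≤ f j) :
    (Tuple.sort f)⁻¹ i < (Tuple.sort f)⁻¹ j := by
  set σ := Tuple.sort f with hσ
  obtain ⟨hmono, hfiber⟩ := Tuple.eq_sort_iff.1 hσ
  refine (lt_or_gt_of_ne (σ⁻¹.injective.ne hij.ne)).resolve_right fun hgt => ?_
  have hfji : f j ≤ f i := by simpa using hmono hgt.le
  simpa using lt_asymm hij (by simpa using hfiber _ _ hgt (by simpa using hfji.antisymm hf))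

lemma exists_strictMonoOn_inv_comp_eq_iff {f T : Fin n → α} (hf : Monotone f)
    (hT : univ.val.map T = univ.val.map f) (S : Set (Fin n)) :
    (∃ u : Equiv.Perm (Fin n), StrictMonoOn ⇑u⁻¹ S ∧ T ∘ u = f) ↔ MonotoneOn T S := by
  refine ⟨fun ⟨u, hu, hTu⟩ c hc d hd hcd => ?_, fun hTS => ?_⟩
  · have hTf : ∀ c, T c = f (u⁻¹ c) := fun c => by simpa using congrFun hTu (u⁻¹ c)
    rw [hTf, hTf]
    exact hf (hu.monotoneOn hc hd hcd)
  · exact ⟨Tuple.sort T, fun c hc d hd hcd => sort_inv_lt_sort_inv hcd (hTS hc hd hcd.le),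
      comp_sort_eq_of_map_univ_eq hf hT⟩

end Rearrangement

section Parabolic

variable {α : Type*} [LinearOrder α] {f : Fin n → α} {P : Finset (Fin (n - 1))}

lemma mem_parab_iff (hf : Monotone f) (hP : ∀ i, i ∈ P ↔ f (lo i) = f (hi i))
    {x : Equiv.Perm (Fin n)} : x ∈ parab n P ↔ ∀ b, f (x b) = f b := by
  refine ⟨fun hx => ?_, fun hx => ?_⟩
  · induction hx using Subgroup.closure_induction with
    | mem _ h =>
      obtain ⟨i, hi, rfl⟩ := h
      exact apply_swap_apply_of_eq ((hP i).1 hi)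
    | one => exact fun _ => rfl
    | mul _ _ _ _ hx hy => exact fun b => (hx _).trans (hy b)
    | inv x _ hx => exact fun b => by simpa using (hx (x⁻¹ b)).symm
  · obtain ⟨l, -, rfl, hl⟩ := exists_reduced_word hf hx
    refine (parab n P).list_prod_mem fun σ hσ => ?_
    obtain ⟨i, hil, rfl⟩ := List.mem_map.1 hσ
    exact Subgroup.subset_closure ⟨i, (hP i).2 (hl i hil), rfl⟩

lemma invCount_le_invCount_mul (hf : Monotone f) {w x : Equiv.Perm (Fin n)}
    (hw : ∀ c d, c < d → f c = f d → w c < w d) (hx : ∀ b, f (x b) = f b) :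
    invCount w ≤ invCount (w * x) := by
  have hx' : ∀ b, f (x⁻¹ b) = f b := fun b => by simpa using (hx (x⁻¹ b)).symm
  refine card_le_card_of_injOn (fun p => (x⁻¹ p.1, x⁻¹ p.2)) (fun p hp => ?_) ?_
  · obtain ⟨hlt, hinv⟩ := mem_inversions.1 hp
    have hflt : f p.1 < f p.2 :=
      (hf hlt.le).lt_of_ne fun h => lt_asymm hinv (hw _ _ hlt h)
    refine mem_inversions.2 ⟨hf.reflect_lt ?_, by simpa using hinv⟩
    rwa [hx', hx']
  · intro p _ q _ h
    simpa [Prod.ext_iff] using h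

lemma isShortR_iff (hf : Monotone f) (hP : ∀ i, i ∈ P ↔ f (lo i) = f (hi i))
    {w : Equiv.Perm (Fin n)} : IsShortR n P w ↔ ∀ c d, c < d → f c = f d → w c < w d := by
  refine ⟨fun hw c d hcd hfcd => ?_, fun hw x hx => ?_⟩
  · have hfiber : StrictMonoOn w (f ⁻¹' {f c}) :=
      strictMonoOn_of_adjacent (Set.ordConnected_singleton.preimage_mono hf)
        fun i hlo hhi => lt_of_isShortR hw ((hP i).2 (hlo.trans hhi.symm))
    exact hfiber rfl hfcd.symm hcd
  · rw [len_eq_invCount, len_eq_invCount]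
    exact invCount_le_invCount_mul hf hw ((mem_parab_iff hf hP).1 hx)

lemma isShort_iff (hf : Monotone f) (hP : ∀ i, i ∈ P ↔ f (lo i) = f (hi i))
    {u : Equiv.Perm (Fin n)} :
    IsShort n P u ↔ ∀ c d, c < d → f c = f d → u⁻¹ c < u⁻¹ d := by
  rw [isShort_iff_isShortR_inv, isShortR_iff hf hP]

lemma forall_mem_parab_lt_iff (hf : Monotone f) (hP : ∀ i, i ∈ P ↔ f (lo i) = f (hi i))
    (c d : Fin n) : (∀ x ∈ parab n P, x c < x d) ↔ f c < f d := by
  refine ⟨fun h => ?_, fun h x hx => ?_⟩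
  · have hlt : c < d := h 1 (one_mem _)
    refine (hf hlt.le).lt_of_ne fun hcd => ?_
    have hswap : Equiv.swap c d ∈ parab n P :=
      (mem_parab_iff hf hP).2 (apply_swap_apply_of_eq hcd)
    simpa using lt_asymm hlt (by simpa using h _ hswap)
  · have hx' := (mem_parab_iff hf hP).1 hx
    exact hf.reflect_lt (by rwa [hx', hx'])

theorem bijOn_isShortR (hf : Monotone f) (hP : ∀ i, i ∈ P ↔ f (lo i) = f (hi i)) :
    Set.BijOn (fun w : Equiv.Perm (Fin n) => fun b => f (w⁻¹ b)) {w | IsShortR n P w}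
      {T | univ.val.map T = univ.val.map f} := by
  have eq_sort : ∀ w, IsShortR n P w → w = Tuple.sort fun b => f (w⁻¹ b) := fun w hw =>
    Tuple.eq_sort_iff.2 ⟨by simpa [Function.comp_def] using hf,
      fun c d hcd hfcd => (isShortR_iff hf hP).1 hw c d hcd (by simpa using hfcd)⟩
  refine ⟨fun w _ => map_univ_comp_perm f w⁻¹, fun w hw w' hw' h => ?_, fun T hT => ?_⟩
  · rw [eq_sort w hw, eq_sort w' hw']
    exact congrArg Tuple.sort h
  · have hTw := comp_sort_eq_of_map_univ_eq hf hT
    refine ⟨Tuple.sort T, (isShortR_iff hf hP).2 fun c d hcd hfcd => ?_, funext fun b => ?_⟩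
    · exact (Tuple.eq_sort_iff.1 rfl).2 c d hcd (by simpa [← hTw] using hfcd)
    · simpa using congrFun hTw.symm ((Tuple.sort T)⁻¹ b)

lemma forall_mem_parab_strictMonoOn_iff (hf : Monotone f)
    (hP : ∀ i, i ∈ P ↔ f (lo i) = f (hi i)) (w : Equiv.Perm (Fin n)) (S : Set (Fin n)) :
    (∀ x ∈ parab n P, StrictMonoOn ⇑(w * x)⁻¹ S) ↔
      StrictMonoOn (fun b => f (w⁻¹ b)) S := by
  refine ⟨fun h c hc d hd hcd => (forall_mem_parab_lt_iff hf hP _ _).1 fun x hx => ?_,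
    fun h x hx c hc d hd hcd => ?_⟩
  · simpa using h x⁻¹ (inv_mem hx) hc hd hcd
  · simpa using (forall_mem_parab_lt_iff hf hP _ _).2 (h hc hd hcd) x⁻¹ (inv_mem hx)

lemma exists_mem_parab_mul_eq_iff (hf : Monotone f) (hP : ∀ i, i ∈ P ↔ f (lo i) = f (hi i))
    (w v : Equiv.Perm (Fin n)) (Q : Equiv.Perm (Fin n) → Prop) :
    (∃ x ∈ parab n P, ∃ u, Q u ∧ w * x = v * u) ↔
      ∃ u, Q u ∧ (fun b => f (w⁻¹ (v b))) ∘ u = f := by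
  simp_rw [mem_parab_iff hf hP]
  refine ⟨fun ⟨x, hx, u, hu, h⟩ => ⟨u, hu, funext fun b => ?_⟩,
    fun ⟨u, hu, h⟩ => ⟨w⁻¹ * (v * u), congrFun h, u, hu, by group⟩⟩
  have hxb : x b = w⁻¹ (v (u b)) := by
    simpa using congrArg (fun g : Equiv.Perm (Fin n) => w⁻¹ (g b)) h
  change f (w⁻¹ (v (u b))) = f b
  rw [← hxb, hx]

end Parabolic

lemma monotoneOn_comp_iff_antitoneOn {α β : Type*} [LinearOrder α] [Preorder β]
    {ρ : Equiv.Perm α} {S : Set α} (hρ : StrictAntiOn ρ S) (hρ' : StrictAntiOn ⇑ρ⁻¹ S)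
    (hS : Set.MapsTo ρ S S) (hS' : Set.MapsTo ⇑ρ⁻¹ S S) {T : α → β} :
    MonotoneOn (T ∘ ρ) S ↔ AntitoneOn T S := by
  refine ⟨fun h c hc d hd hcd => ?_,
    fun h c hc d hd hcd => h (hS hd) (hS hc) (hρ.antitoneOn hc hd hcd)⟩
  simpa using h (hS' hd) (hS' hc) (hρ'.antitoneOn hc hd hcd)

section Hook

variable {k : ℕ}

/- `W_p` and `W_q` are the parabolic subgroups of the level sets of `b ↦ min b k` (the row is one
level) and of `b ↦ max b (k - 1)` (the column is one level). -/
lemma mem_Pset_iff (i : Fin (n - 1)) :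
    i ∈ Pset n k ↔ min (lo i : ℕ) k = min (hi i : ℕ) k := by
  simp only [Pset, mem_filter, mem_univ, true_and, val_lo, val_hi]
  omega

lemma mem_Qset_iff (i : Fin (n - 1)) :
    i ∈ Qset n k ↔ max (lo i : ℕ) (k - 1) = max (hi i : ℕ) (k - 1) := by
  simp only [Qset, mem_filter, mem_univ, true_and, val_lo, val_hi]
  omega

lemma monotone_max_val (k : ℕ) : Monotone fun b : Fin n => max (b : ℕ) (k - 1) :=
  fun _ _ h => max_le_max_right (k - 1) (Fin.le_def.1 h)

lemma isShort_Pset_iff {u : Equiv.Perm (Fin n)} :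
    IsShort n (Pset n k) u ↔ StrictMonoOn ⇑u⁻¹ {b | k ≤ (b : ℕ)} := by
  rw [isShort_iff (fun _ _ h => min_le_min_right k (Fin.le_def.1 h)) mem_Pset_iff]
  refine ⟨fun h c hc d hd hcd => h c d hcd ?_, fun h c d hcd hfcd => h ?_ ?_ hcd⟩ <;>
    simp only [Set.mem_ofPred_eq, Fin.lt_def] at * <;> omega

lemma isShort_Qset_iff {u : Equiv.Perm (Fin n)} :
    IsShort n (Qset n k) u ↔ StrictMonoOn ⇑u⁻¹ {b | (b : ℕ) < k} := by
  rw [isShort_iff (monotone_max_val k) mem_Qset_iff]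
  refine ⟨fun h c hc d hd hcd => h c d hcd ?_, fun h c d hcd hfcd => h ?_ ?_ hcd⟩ <;>
    simp only [Set.mem_ofPred_eq, Fin.lt_def] at * <;> omega

lemma mapsTo_of_mem_parab_Qset {x : Equiv.Perm (Fin n)} (hx : x ∈ parab n (Qset n k)) :
    Set.MapsTo x {b | (b : ℕ) < k} {b | (b : ℕ) < k} := fun b hb => by
  have := (mem_parab_iff (monotone_max_val k) mem_Qset_iff).1 hx b
  simp only [Set.mem_ofPred_eq] at hb ⊢
  omega

lemma strictAntiOn_of_isLongest {x : Equiv.Perm (Fin n)} (hx : x ∈ parab n (Qset n k))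
    (hmax : ∀ y ∈ parab n (Qset n k), len n y ≤ len n x) :
    StrictAntiOn x {b | (b : ℕ) < k} := by
  refine strictMonoOn_of_adjacent (β := (Fin n)ᵒᵈ) (Set.ordConnected_Iio (a := k).preimage_mono
    Fin.val_strictMono.monotone) fun i _ hhi => ?_
  refine (lt_or_gt_of_ne (x.injective.ne (lo_lt_hi i).ne)).resolve_left fun h => ?_
  have hiQ : i ∈ Qset n k := by simpa [Qset] using hhi
  have := hmax _ (mul_mem hx (Subgroup.subset_closure ⟨i, hiQ, rfl⟩))
  rw [len_eq_invCount, len_eq_invCount, invCount_mul_s_of_lt h] at this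
  omega

lemma admissible_iff {l : ℕ} {T : Fin n → Fin l} :
    Admissible k T ↔
      AntitoneOn T {b | (b : ℕ) < k} ∧ StrictMonoOn T {b | k ≤ (b : ℕ)} := by
  simp only [Admissible, AntitoneOn, StrictMonoOn, Set.mem_ofPred_eq]
  refine ⟨fun ⟨hcol, hrow⟩ =>
      ⟨fun c _ d hd hcd => ?_, fun c hc d _ hcd => hrow c d hc hcd⟩,
    fun ⟨hcol, hrow⟩ => ⟨fun c d hcd hd => hcol (by omega) hd (Fin.le_def.1 hcd.le),
      fun c d hc hcd => hrow hc (by omega) hcd⟩⟩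
  rcases hcd.lt_or_eq with hcd | rfl
  exacts [hcol c d hcd hd, le_rfl]

variable {α : Type*} [LinearOrder α] {f : Fin n → α} {P : Finset (Fin (n - 1))}

lemma forall_mem_parab_isShort_Pset_iff (hf : Monotone f)
    (hP : ∀ i, i ∈ P ↔ f (lo i) = f (hi i)) (w : Equiv.Perm (Fin n)) :
    (∀ x ∈ parab n P, IsShort n (Pset n k) (w * x)) ↔
      StrictMonoOn (fun b => f (w⁻¹ b)) {b | k ≤ (b : ℕ)} := by
  simp_rw [isShort_Pset_iff]
  exact forall_mem_parab_strictMonoOn_iff hf hP w _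

lemma exists_mem_parab_isShort_Qset_iff (hf : Monotone f)
    (hP : ∀ i, i ∈ P ↔ f (lo i) = f (hi i)) (w : Equiv.Perm (Fin n))
    {wq : Equiv.Perm (Fin n)} (hwq : wq ∈ parab n (Qset n k))
    (hmax : ∀ x ∈ parab n (Qset n k), len n x ≤ len n wq) :
    (∃ x ∈ parab n P, ∃ u, IsShort n (Qset n k) u ∧ w * x = wq * u) ↔
      AntitoneOn (fun b => f (w⁻¹ b)) {b | (b : ℕ) < k} := by
  have hmax' : ∀ x ∈ parab n (Qset n k), len n x ≤ len n wq⁻¹ := by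
    simpa only [len_inv] using hmax
  simp_rw [exists_mem_parab_mul_eq_iff hf hP, isShort_Qset_iff]
  exact (exists_strictMonoOn_inv_comp_eq_iff hf (map_univ_comp_perm f (w⁻¹ * wq)) _).trans <|
    monotoneOn_comp_iff_antitoneOn (T := fun b => f (w⁻¹ b))
    (strictAntiOn_of_isLongest hwq hmax) (strictAntiOn_of_isLongest (inv_mem hwq) hmax')
    (mapsTo_of_mem_parab_Qset hwq) (mapsTo_of_mem_parab_Qset (inv_mem hwq))

end Hook

section MinimalTableau

variable {l : ℕ} {a : Fin l → ℕ}

def IsMinTableau (a : Fin l → ℕ) (T : Fin n → Fin l) : Prop :=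
  ∀ b v, T b = v ↔
    (∑ u ∈ univ.filter (fun u => u < v), a u) ≤ (b : ℕ) ∧
      (b : ℕ) < ∑ u ∈ univ.filter (fun u => u ≤ v), a u

lemma IsMinTableau.monotone {T : Fin n → Fin l} (hT : IsMinTableau a T) : Monotone T := by
  intro b b' hbb'
  by_contra! hlt
  have hb := ((hT b (T b)).1 rfl).1
  have hb' := ((hT b' (T b')).1 rfl).2
  have hsum : ∑ u ∈ univ.filter (fun u => u ≤ T b'), a u ≤
      ∑ u ∈ univ.filter (fun u => u < T b), a u :=
    sum_le_sum_of_subset fun u hu => by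
      simp only [mem_filter] at hu ⊢
      exact ⟨hu.1, hu.2.trans_lt hlt⟩
  have := Fin.le_def.1 hbb'
  omega

lemma card_filter_val_mem_Ico {p q : ℕ} (h : q ≤ n) :
    #{b : Fin n | p ≤ (b : ℕ) ∧ (b : ℕ) < q} = q - p := by
  rw [← Nat.card_Ico, ← card_map Fin.valEmbedding]
  congr 1
  ext m
  simp only [mem_map, mem_filter, mem_univ, true_and, Fin.valEmbedding_apply, mem_Ico]
  exact ⟨fun ⟨b, hb, hbm⟩ => hbm ▸ hb, fun hm => ⟨⟨m, by omega⟩, hm, rfl⟩⟩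

lemma IsMinTableau.isType {T : Fin n → Fin l} (hT : IsMinTableau a T) (hsum : ∑ u, a u = n) :
    IsType a T := by
  intro v
  have hle : univ.filter (fun u => u ≤ v) = insert v (univ.filter (fun u => u < v)) := by
    ext u
    simp [le_iff_lt_or_eq, or_comm]
  have hcle : ∑ u ∈ univ.filter (fun u => u ≤ v), a u ≤ n :=
    hsum ▸ sum_le_sum_of_subset (filter_subset _ _)
  have hsplit : ∑ u ∈ univ.filter (fun u => u ≤ v), a u =
      a v + ∑ u ∈ univ.filter (fun u => u < v), a u := by
    rw [hle, sum_insert (by simp)]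
  simp_rw [hT _ v]
  rw [card_filter_val_mem_Ico hcle]
  omega

lemma count_map_univ {β : Type*} [DecidableEq β] (T : Fin n → β) (v : β) :
    (univ.val.map T).count v = #{b | T b = v} := by
  rw [Multiset.count_map]
  simp [Finset.card, Finset.filter_val, eq_comm]

lemma isType_iff_map_univ_eq {T₀ T : Fin n → Fin l} (h₀ : IsType a T₀) :
    IsType a T ↔ univ.val.map T = univ.val.map T₀ := by
  simp only [IsType, Multiset.ext, count_map_univ]
  exact forall_congr' fun v => by rw [h₀ v]

end MinimalTableau

end HookTableau

open HookTableau

theorem statement19 (n l k : ℕ)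
    (a : Fin l → ℕ) (hsum : ∑ i, a i = n)
    -- the minimal tableau T_a^min of type a
    (Tmin : Fin n → Fin l)
    (hTmin : ∀ (b : Fin n) (v : Fin l), Tmin b = v ↔
      (∑ u ∈ Finset.univ.filter (fun u => u < v), a u) ≤ (b : ℕ) ∧
        (b : ℕ) < ∑ u ∈ Finset.univ.filter (fun u => u ≤ v), a u)
    -- the Young subgroup S_a: the stabilizer of T_a^min, generated by the simple
    -- transpositions of adjacent boxes with equal entries
    (Sa : Finset (Fin (n - 1)))
    (hSa : ∀ i : Fin (n - 1), i ∈ Sa ↔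
      Tmin ⟨(i : ℕ), by have := i.isLt; omega⟩ = Tmin ⟨(i : ℕ) + 1, by have := i.isLt; omega⟩)
    -- the longest element of W_q = ⟨s_1,…,s_{k-1}⟩
    (wq : Equiv.Perm (Fin n))
    (hwq : wq ∈ parab n (Qset n k) ∧ ∀ x ∈ parab n (Qset n k), len n x ≤ len n wq) :
    -- the map w ↦ T_a(w) = w·T_a^min is a bijection from (S_n/S_a)^short onto the
    -- (n-k,k)-tableaux of type a ...
    Set.BijOn (fun w : Equiv.Perm (Fin n) => (fun b => Tmin (w⁻¹ b)))
      {w | IsShortR n Sa w} {T : Fin n → Fin l | IsType a T} ∧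
    -- ... and restricts to a bijection from Λ_k(a) onto the admissible ones
    Set.BijOn (fun w : Equiv.Perm (Fin n) => (fun b => Tmin (w⁻¹ b)))
      (LambdaSet n (Pset n k) (Qset n k) Sa wq)
      {T : Fin n → Fin l | IsType a T ∧ Admissible k T} := by
  have hmono : Monotone Tmin := IsMinTableau.monotone hTmin
  have htype (T : Fin n → Fin l) :
      IsType a T ↔ Finset.univ.val.map T = Finset.univ.val.map Tmin :=
    isType_iff_map_univ_eq (IsMinTableau.isType hTmin hsum)
  have hbij : Set.BijOn (fun w : Equiv.Perm (Fin n) => fun b => Tmin (w⁻¹ b))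
      {w | IsShortR n Sa w} {T | IsType a T} := by
    simpa only [htype] using bijOn_isShortR hmono hSa
  have hadm (w : Equiv.Perm (Fin n)) :
      ((∀ x ∈ parab n Sa, IsShort n (Pset n k) (w * x)) ∧
        ∃ x ∈ parab n Sa, ∃ u, IsShort n (Qset n k) u ∧ w * x = wq * u) ↔
      Admissible k fun b => Tmin (w⁻¹ b) := by
    rw [admissible_iff, forall_mem_parab_isShort_Pset_iff hmono hSa,
      exists_mem_parab_isShort_Qset_iff hmono hSa w hwq.1 hwq.2, and_comm]
  exact ⟨hbij, hbij.inter_mapsTo (t₂ := {T | Admissible k T}) (fun w hw => (hadm w).1 hw)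
    fun w hw => (hadm w).2 hw.2⟩
end
end
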